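/- arXiv:2112.13427 — 13 statements merged into one kernel-verified Lean document; each statement's English description precedes it below -/
import Mathlib

section
/- A transformation α of {1,…,n} is a weak endomorphism of the directed path P⃗ₙ if and only if α is order-preserving and its image is an interval of {1,…,n}. -/
def wEnd (n : ℕ) (α : Fin n → Fin n) : Prop :=
  ∀ u v : Fin n, (v : ℕ) = (u : ℕ) + 1 → α u ≠ α v → (α v : ℕ) = (α u : ℕ) + 1

theorem stmt_2 (n : ℕ) (hn : 1 ≤ n) (α : Fin n → Fin n) :
    wEnd n α ↔ Monotone α ∧ ∃ a b : Fin n, Set.range α = Set.Icc a b := by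
  obtain ⟨m, rfl⟩ : ∃ m, n = m + 1 := ⟨n - 1, by omega⟩
  constructor
  · intro h
    have step : ∀ i : Fin m, (α i.succ : ℕ) = (α i.castSucc : ℕ) ∨
        (α i.succ : ℕ) = (α i.castSucc : ℕ) + 1 := by
      intro i
      by_cases he : α i.castSucc = α i.succ
      · left; rw [he]
      · right; exact h i.castSucc i.succ (by simp) he
    have mono : Monotone α := by
      rw [Fin.monotone_iff_le_succ]
      intro i
      rcases step i with hs | hs <;> (rw [Fin.le_def]; omega)
    refine ⟨mono, α 0, α (Fin.last m), ?_⟩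
    apply Set.eq_of_subset_of_subset
    · rintro _ ⟨i, rfl⟩
      exact ⟨mono (Fin.zero_le i), mono (Fin.le_last i)⟩
    · -- IVT
      have ivt : ∀ k : ℕ, (hk : k ≤ m) → ∀ c : Fin (m+1),
          α 0 ≤ c → c ≤ α ⟨k, by omega⟩ → c ∈ Set.range α := by
        intro k
        induction k with
        | zero =>
          intro _ c h1 h2
          have : c = α ⟨0, by omega⟩ := le_antisymm h2 h1
          exact ⟨_, this.symm⟩
        | succ k ih =>
          intro hk c h1 h2
          by_cases hc : c ≤ α ⟨k, by omega⟩
          · exact ih (by omega) c h1 hc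
          · push_neg at hc
            have hs := step ⟨k, by omega⟩
            have hcs : ((⟨k, by omega⟩ : Fin m).castSucc : Fin (m+1)) = ⟨k, by omega⟩ := by
              apply Fin.ext; simp
            have hss : ((⟨k, by omega⟩ : Fin m).succ : Fin (m+1)) = ⟨k+1, by omega⟩ := by
              apply Fin.ext; simp
            rw [hcs, hss] at hs
            have : c = α ⟨k+1, by omega⟩ := by
              rw [Fin.lt_def] at hc; rw [Fin.le_def] at h2
              apply Fin.ext; omega
            exact ⟨_, this.symm⟩
      rintro c ⟨h1, h2⟩
      have : (Fin.last m) = ⟨m, by omega⟩ := rfl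
      rw [this] at h2
      exact ivt m le_rfl c h1 h2
  · rintro ⟨mono, a, b, hr⟩ u v huv hne
    have hlt : α u < α v := lt_of_le_of_ne (mono (by rw [Fin.le_def]; omega)) hne
    by_contra hc
    rw [Fin.lt_def] at hlt
    have hub : (α u : ℕ) + 1 < m + 1 := by have := (α v).isLt; omega
    set c : Fin (m+1) := ⟨(α u : ℕ) + 1, hub⟩ with hcdef
    have hau : α u ∈ Set.Icc a b := hr ▸ ⟨u, rfl⟩
    have hav : α v ∈ Set.Icc a b := hr ▸ ⟨v, rfl⟩
    have hcmem : c ∈ Set.Icc a b := by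
      constructor
      · exact le_trans hau.1 (by rw [Fin.le_def]; simp [hcdef])
      · refine le_trans ?_ hav.2
        rw [Fin.le_def]; simp [hcdef]; omega
    rw [← hr] at hcmem
    obtain ⟨w, hw⟩ := hcmem
    rcases le_or_gt w u with hwu | huw
    · have := mono hwu
      rw [hw, Fin.le_def] at this; simp [hcdef] at this
    · have hvw : v ≤ w := by rw [Fin.le_def]; rw [Fin.lt_def] at huw; omega
      have := mono hvw
      rw [hw, Fin.le_def] at this; simp [hcdef] at this; omega
end

section
/- The strong weak endomorphisms of the directed path P⃗ₙ are exactly the constant maps together with the identity map. -/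
set_option maxHeartbeats 1000000


/-- `α` is a strong weak endomorphism of the directed path with `n` vertices. -/
def swEnd (n : ℕ) (α : Fin n → Fin n) : Prop :=
  ∀ u v : Fin n, (((v : ℕ) = (u : ℕ) + 1) ∧ α u ≠ α v) ↔ ((α v : ℕ) = (α u : ℕ) + 1)

theorem stmt_4 (n : ℕ) (hn : 1 ≤ n) (α : Fin n → Fin n) :
    swEnd n α ↔ ((∃ c : Fin n, α = fun _ => c) ∨ α = id) := by
  constructor
  · intro h
    have rev : ∀ u v : Fin n, (α v : ℕ) = (α u : ℕ) + 1 → (v : ℕ) = (u : ℕ) + 1 :=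
      fun u v hv => ((h u v).mpr hv).1
    have step : ∀ i (h1 : i + 1 < n),
        (α ⟨i+1, h1⟩ : ℕ) = (α ⟨i, by omega⟩ : ℕ) ∨
        (α ⟨i+1, h1⟩ : ℕ) = (α ⟨i, by omega⟩ : ℕ) + 1 := by
      intro i h1
      by_cases heq : α ⟨i, by omega⟩ = α ⟨i+1, h1⟩
      · left; rw [heq]
      · right; exact (h ⟨i, by omega⟩ ⟨i+1, h1⟩).mp ⟨rfl, heq⟩
    rcases Nat.lt_or_ge 1 n with h2 | h1
    · by_cases hd : (α ⟨1, h2⟩ : ℕ) = (α ⟨0, by omega⟩ : ℕ) + 1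
      · right
        have stepone : ∀ k (hk : k + 1 < n),
            (α ⟨k+1, hk⟩ : ℕ) = (α ⟨k, by omega⟩ : ℕ) + 1 := by
          intro k
          induction k with
          | zero => intro hk; exact hd
          | succ m ih =>
            intro hk
            rcases step (m+1) hk with h0 | h1'
            · exfalso
              have hm := ih (by omega)
              have hcomb : (α ⟨m+1+1, hk⟩ : ℕ) = (α ⟨m, by omega⟩ : ℕ) + 1 := by
                rw [h0]; exact hm
              have := rev ⟨m, by omega⟩ ⟨m+1+1, hk⟩ hcomb
              simp at this
            · exact h1'
        have key : ∀ i (hi : i < n), (α ⟨i, hi⟩ : ℕ) = (α ⟨0, by omega⟩ : ℕ) + i := by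
          intro i
          induction i with
          | zero => intro hi; rfl
          | succ m ih =>
            intro hi
            rw [stepone m hi, ih (by omega)]
            omega
        have h0 : (α ⟨0, by omega⟩ : ℕ) = 0 := by
          have hk := key (n-1) (by omega)
          have hb := (α ⟨n-1, by omega⟩).isLt
          omega
        funext i
        have hk := key i i.isLt
        apply Fin.ext
        simp only [id]
        rw [show (⟨(i:ℕ), i.isLt⟩ : Fin n) = i from Fin.ext rfl] at hk
        omega
      · left
        have hd0 : (α ⟨1, h2⟩ : ℕ) = (α ⟨0, by omega⟩ : ℕ) := by
          rcases step 0 h2 with h0 | h1'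
          · exact h0
          · exact absurd h1' hd
        have stepzero : ∀ k (hk : k + 1 < n),
            (α ⟨k+1, hk⟩ : ℕ) = (α ⟨k, by omega⟩ : ℕ) := by
          intro k
          induction k with
          | zero => intro hk; exact hd0
          | succ m ih =>
            intro hk
            rcases step (m+1) hk with h0 | h1'
            · exact h0
            · exfalso
              have hm := ih (by omega)
              have hcomb : (α ⟨m+1+1, hk⟩ : ℕ) = (α ⟨m, by omega⟩ : ℕ) + 1 := by
                rw [h1', hm]
              have := rev ⟨m, by omega⟩ ⟨m+1+1, hk⟩ hcomb
              simp at this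
        have key : ∀ i (hi : i < n), (α ⟨i, hi⟩ : ℕ) = (α ⟨0, by omega⟩ : ℕ) := by
          intro i
          induction i with
          | zero => intro hi; rfl
          | succ m ih =>
            intro hi
            rw [stepzero m hi, ih (by omega)]
        refine ⟨α ⟨0, by omega⟩, funext fun i => ?_⟩
        have hk := key i i.isLt
        apply Fin.ext
        rw [show (⟨(i:ℕ), i.isLt⟩ : Fin n) = i from Fin.ext rfl] at hk
        exact hk
    · left
      refine ⟨α ⟨0, by omega⟩, funext fun i => ?_⟩
      congr 1
      apply Fin.ext
      omega
  · rintro (⟨c, rfl⟩ | rfl)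
    · intro u v
      constructor
      · rintro ⟨-, hne⟩; exact absurd rfl hne
      · intro hv; simp at hv
    · intro u v
      simp only [id]
      constructor
      · exact fun hx => hx.1
      · intro hv
        refine ⟨hv, fun e => ?_⟩
        rw [e] at hv
        omega
end

section
/- The number of weak endomorphisms of the directed path P⃗ₙ equals the sum over k from 1 to n of (n−k+1)·C(n−1,k−1). -/
namespace AuxWE

variable {m : ℕ}

lemma filter_lt_succ (S : Finset (Fin m)) (j : ℕ) (hj : j < m) :
    (S.filter (fun i : Fin m => (i : ℕ) < j + 1)).card =
    (S.filter (fun i : Fin m => (i : ℕ) < j)).card + (if (⟨j, hj⟩ : Fin m) ∈ S then 1 else 0) := by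
  rw [Finset.card_filter, Finset.card_filter,
    ← Finset.sum_ite_eq' S (⟨j, hj⟩ : Fin m) (fun _ => 1), ← Finset.sum_add_distrib]
  refine Finset.sum_congr rfl fun i _ => ?_
  have h : i = (⟨j, hj⟩ : Fin m) ↔ (i : ℕ) = j := by rw [Fin.ext_iff]
  split_ifs <;> omega

/-- the set of increasing steps -/
def stepSet (α : Fin (m+1) → Fin (m+1)) : Finset (Fin m) :=
  Finset.univ.filter fun i : Fin m => α i.succ ≠ α i.castSucc

lemma mem_stepSet {α : Fin (m+1) → Fin (m+1)} {j : ℕ} (hj : j < m) :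
    (⟨j, hj⟩ : Fin m) ∈ stepSet α ↔
      α ⟨j+1, by omega⟩ ≠ α ⟨j, by omega⟩ := by
  have h1 : (⟨j, hj⟩ : Fin m).succ = (⟨j+1, by omega⟩ : Fin (m+1)) := rfl
  have h2 : (⟨j, hj⟩ : Fin m).castSucc = (⟨j, by omega⟩ : Fin (m+1)) := rfl
  simp [stepSet, h1, h2]

lemma val_eq (α : Fin (m+1) → Fin (m+1)) (hα : wEnd (m+1) α) :
    ∀ j (hj : j ≤ m), (α ⟨j, by omega⟩ : ℕ) =
      (α 0 : ℕ) + ((stepSet α).filter (fun i : Fin m => (i : ℕ) < j)).card := by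
  intro j
  induction j with
  | zero => intro hj; simp [show (⟨0, by omega⟩ : Fin (m+1)) = 0 from rfl]
  | succ j ih =>
    intro hj
    have hjm : j < m := hj
    rw [filter_lt_succ _ j hjm]
    by_cases h : α ⟨j+1, by omega⟩ = α ⟨j, by omega⟩
    · rw [if_neg (by rw [mem_stepSet hjm]; simpa using h), h, ih (by omega)]
      omega
    · have := hα ⟨j, by omega⟩ ⟨j+1, by omega⟩ rfl (fun e => h e.symm)
      rw [if_pos ((mem_stepSet hjm).2 h), this, ih (by omega)]
      omega

abbrev pairType (m : ℕ) := {p : Finset (Fin m) × Fin (m+1) // (p.2 : ℕ) + p.1.card ≤ m}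

lemma card_filter_le (S : Finset (Fin m)) (j : ℕ) :
    (S.filter (fun i : Fin m => (i : ℕ) < j)).card ≤ S.card :=
  Finset.card_le_card (Finset.filter_subset _ _)

def toFun' (α : {α : Fin (m+1) → Fin (m+1) // wEnd (m+1) α}) : pairType m := by
  refine ⟨(stepSet α.1, α.1 0), ?_⟩
  have h := val_eq α.1 α.2 m le_rfl
  have hf : (stepSet α.1).filter (fun i : Fin m => (i : ℕ) < m) = stepSet α.1 := by
    apply Finset.filter_true_of_mem; intro i _; exact i.isLt
  rw [hf] at h
  have := (α.1 ⟨m, by omega⟩).isLt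
  dsimp only
  omega

def invα (p : pairType m) : Fin (m+1) → Fin (m+1) := fun j =>
  ⟨(p.1.2 : ℕ) + (p.1.1.filter (fun i : Fin m => (i : ℕ) < (j : ℕ))).card, by
    have := card_filter_le p.1.1 (j : ℕ); have := p.2; omega⟩

lemma invα_wEnd (p : pairType m) : wEnd (m+1) (invα p) := by
  intro u v huv hne
  have hu : (u : ℕ) < m := by have := v.isLt; omega
  have key := filter_lt_succ p.1.1 (u : ℕ) hu
  have hv : (invα p v : ℕ) = (p.1.2 : ℕ) +
      (p.1.1.filter (fun i : Fin m => (i : ℕ) < (u : ℕ) + 1)).card := by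
    simp only [invα, huv]
  by_cases h : (⟨(u : ℕ), hu⟩ : Fin m) ∈ p.1.1
  · rw [if_pos h] at key
    simp only [invα] at *
    omega
  · exfalso; apply hne; rw [if_neg h] at key
    apply Fin.ext
    simp only [invα] at *
    omega

def theEquiv : {α : Fin (m+1) → Fin (m+1) // wEnd (m+1) α} ≃ pairType m where
  toFun := toFun'
  invFun p := ⟨invα p, invα_wEnd p⟩
  left_inv := by
    rintro ⟨α, hα⟩
    apply Subtype.ext
    funext j
    apply Fin.ext
    have := val_eq α hα (j : ℕ) (by omega)
    simp only [invα, toFun']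
    rw [show (⟨(j : ℕ), by omega⟩ : Fin (m+1)) = j from Fin.ext rfl] at this
    omega
  right_inv := by
    rintro ⟨⟨S, a⟩, hp⟩
    apply Subtype.ext
    have ha : invα ⟨(S, a), hp⟩ 0 = a := by
      apply Fin.ext; simp [invα]
    refine Prod.ext ?_ ha
    show stepSet (invα ⟨(S, a), hp⟩) = S
    ext i
    rcases i with ⟨j, hj⟩
    rw [mem_stepSet hj]
    have key := filter_lt_succ S j hj
    constructor
    · intro hne
      by_contra h
      apply hne; apply Fin.ext
      rw [if_neg h] at key
      simp only [invα]
      simpa using key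
    · intro h hne
      rw [if_pos h] at key
      have : (invα ⟨(S, a), hp⟩ ⟨j+1, by omega⟩ : ℕ) =
          (invα ⟨(S, a), hp⟩ ⟨j, by omega⟩ : ℕ) := by rw [hne]
      simp only [invα] at this
      omega

def fiberEquiv (k : ℕ) (hk : k ≤ m) :
    {a : Fin (m+1) // (a : ℕ) + k ≤ m} ≃ Fin (m + 1 - k) where
  toFun a := ⟨a.1, by omega⟩
  invFun j := ⟨⟨(j : ℕ), by omega⟩, by simp; omega⟩
  left_inv a := by apply Subtype.ext; apply Fin.ext; rfl
  right_inv j := rfl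

lemma card_pairType : Nat.card (pairType m) =
    ∑ k ∈ Finset.range (m + 1), Nat.choose m k * (m + 1 - k) := by
  rw [Nat.card_eq_fintype_card]
  rw [Fintype.card_congr
    (Equiv.subtypeProdEquivSigmaSubtype fun (S : Finset (Fin m)) (a : Fin (m+1)) =>
      (a : ℕ) + S.card ≤ m)]
  rw [Fintype.card_sigma]
  have hcard : ∀ S : Finset (Fin m),
      Fintype.card {a : Fin (m+1) // (a : ℕ) + S.card ≤ m} = m + 1 - S.card := by
    intro S
    have hS : S.card ≤ m := by
      simpa using Finset.card_le_card (Finset.subset_univ S)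
    rw [Fintype.card_congr (fiberEquiv S.card hS), Fintype.card_fin]
  simp only [hcard]
  have := Finset.sum_powerset_apply_card (fun k => m + 1 - k)
    (x := (Finset.univ : Finset (Fin m)))
  rw [Finset.powerset_univ] at this
  simpa using this

end AuxWE

theorem stmt_5 (n : ℕ) (hn : 1 ≤ n) :
    Nat.card {α : Fin n → Fin n // wEnd n α} =
      ∑ k ∈ Finset.Icc 1 n, (n - k + 1) * Nat.choose (n - 1) (k - 1) := by
  obtain ⟨m, rfl⟩ : ∃ m, n = m + 1 := ⟨n - 1, by omega⟩
  rw [Nat.card_congr AuxWE.theEquiv, AuxWE.card_pairType]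
  refine Finset.sum_nbij' (fun j => j + 1) (fun k => k - 1) ?_ ?_ ?_ ?_ ?_
  · intro a ha; simp only [Finset.mem_range, Finset.mem_Icc] at ha ⊢; omega
  · intro a ha; simp only [Finset.mem_range, Finset.mem_Icc] at ha ⊢; omega
  · intro a ha; simp only [Finset.mem_range, Finset.mem_Icc] at ha ⊢; omega
  · intro a ha; simp only [Finset.mem_range, Finset.mem_Icc] at ha ⊢; omega
  · intro a ha
    rw [Finset.mem_range] at ha
    have h1 : m + 1 - (a + 1) + 1 = m + 1 - a := by omega
    have h2 : m + 1 - 1 = m := by omega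
    have h3 : a + 1 - 1 = a := by omega
    rw [h1, h2, h3, Nat.mul_comm]
end

section
/- For each k with 1 ≤ k ≤ n, the number of weak endomorphisms of P⃗ₙ whose image has exactly k elements is (n−k+1)·C(n−1,k−1). -/
namespace StmtAux

variable {n : ℕ}

/-- number of elements of `S` below `i` -/
def cnt (S : Finset (Fin (n-1))) (i : ℕ) : ℕ :=
  (S.filter (fun (j : Fin (n-1)) => (j : ℕ) < i)).card

lemma cnt_zero (S : Finset (Fin (n-1))) : cnt S 0 = 0 := by
  simp [cnt]

lemma cnt_succ (S : Finset (Fin (n-1))) (i : ℕ) :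
    cnt S (i+1) = cnt S i + (S.filter (fun (j : Fin (n-1)) => (j:ℕ) = i)).card := by
  unfold cnt
  rw [← Finset.card_union_of_disjoint]
  · congr 1
    ext j
    simp only [Finset.mem_filter, Finset.mem_union]
    constructor
    · rintro ⟨hj, h⟩
      rcases Nat.lt_succ_iff_lt_or_eq.mp h with h | h
      · exact Or.inl ⟨hj, h⟩
      · exact Or.inr ⟨hj, h⟩
    · rintro (⟨hj, h⟩ | ⟨hj, h⟩) <;> exact ⟨hj, by omega⟩
  · rw [Finset.disjoint_left]
    intro j hj hj'
    simp only [Finset.mem_filter] at hj hj'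
    omega

lemma dcnt_eq (S : Finset (Fin (n-1))) (j : Fin (n-1)) :
    (S.filter (fun (j' : Fin (n-1)) => (j':ℕ) = (j:ℕ))).card = if j ∈ S then 1 else 0 := by
  have h : (S.filter (fun (j' : Fin (n-1)) => (j':ℕ) = (j:ℕ)))
      = S.filter (fun j' => j' = j) := by
    apply Finset.filter_congr
    intro x _
    simp [Fin.ext_iff]
  rw [h, Finset.filter_eq']
  split <;> simp

lemma dcnt_eq' (S : Finset (Fin (n-1))) (i : ℕ) (hi : i < n-1) :
    (S.filter (fun (j : Fin (n-1)) => (j:ℕ) = i)).card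
      = if (⟨i, hi⟩ : Fin (n-1)) ∈ S then 1 else 0 :=
  dcnt_eq S ⟨i, hi⟩

lemma cnt_le_card (S : Finset (Fin (n-1))) (i : ℕ) : cnt S i ≤ S.card :=
  Finset.card_le_card (Finset.filter_subset _ _)

lemma cnt_all (S : Finset (Fin (n-1))) (i : ℕ) (h : n - 1 ≤ i) : cnt S i = S.card := by
  unfold cnt
  rw [Finset.filter_true_of_mem]
  intro j _
  have := j.isLt
  omega

lemma cnt_ivt (S : Finset (Fin (n-1))) :
    ∀ m t, t ≤ cnt S m → ∃ i ≤ m, cnt S i = t := by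
  intro m
  induction m with
  | zero => intro t ht; exact ⟨0, le_refl _, by rw [cnt_zero] at ht ⊢; omega⟩
  | succ m ih =>
    intro t ht
    by_cases h : t ≤ cnt S m
    · obtain ⟨i, hi, hi'⟩ := ih t h
      exact ⟨i, by omega, hi'⟩
    · refine ⟨m+1, le_refl _, ?_⟩
      have h1 := cnt_succ S m
      have h2 : (S.filter (fun (j : Fin (n-1)) => (j:ℕ) = m)).card ≤ 1 := by
        apply Finset.card_le_one.mpr
        intro a ha b hb
        simp only [Finset.mem_filter] at ha hb
        exact Fin.ext (by omega)
      omega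

/-- the set of "jump" positions of `α` -/
def Sof (hn : 1 ≤ n) (α : Fin n → Fin n) : Finset (Fin (n-1)) :=
  Finset.univ.filter (fun j => α ⟨j, by have := j.isLt; omega⟩ ≠ α ⟨(j:ℕ)+1, by have := j.isLt; omega⟩)

lemma val_eq (hn : 1 ≤ n) {α : Fin n → Fin n} (hα : wEnd n α) :
    ∀ i (h : i < n), (α ⟨i, h⟩ : ℕ) = (α ⟨0, by omega⟩ : ℕ) + cnt (Sof hn α) i := by
  intro i
  induction i with
  | zero => intro h; rw [cnt_zero]; rfl
  | succ i ih =>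
    intro h
    have hi : i < n := by omega
    have hi' : i < n - 1 := by omega
    have hd := dcnt_eq' (Sof hn α) i hi'
    have hcs := cnt_succ (Sof hn α) i
    have hmem : (⟨i, hi'⟩ : Fin (n-1)) ∈ Sof hn α ↔ α ⟨i, hi⟩ ≠ α ⟨i+1, h⟩ := by
      simp [Sof]
    by_cases hne : α ⟨i, hi⟩ = α ⟨i+1, h⟩
    · have hns : (⟨i, hi'⟩ : Fin (n-1)) ∉ Sof hn α := by rw [hmem]; simp [hne]
      rw [if_neg hns] at hd
      have := ih hi
      rw [← hne]
      omega
    · have hstep := hα ⟨i, hi⟩ ⟨i+1, h⟩ rfl hne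
      have hs : (⟨i, hi'⟩ : Fin (n-1)) ∈ Sof hn α := hmem.mpr hne
      rw [if_pos hs] at hd
      have := ih hi
      omega

lemma image_card (hn : 1 ≤ n) {α : Fin n → Fin n} (hα : wEnd n α) :
    (Finset.univ.image α).card = (Sof hn α).card + 1 := by
  set S := Sof hn α with hS
  set a : ℕ := (α ⟨0, by omega⟩ : ℕ) with ha
  have key : Finset.image Fin.val (Finset.univ.image α)
      = Finset.image (fun t => a + t) (Finset.range (S.card + 1)) := by
    ext m
    simp only [Finset.mem_image, Finset.mem_range, Finset.mem_univ, true_and]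
    constructor
    · rintro ⟨x, ⟨i, rfl⟩, rfl⟩
      refine ⟨cnt S i.val, by have := cnt_le_card S i.val; omega, ?_⟩
      have hv := val_eq hn hα i.val i.isLt
      simp only [Fin.eta] at hv
      rw [← hS, ← ha] at hv
      omega
    · rintro ⟨t, ht, rfl⟩
      obtain ⟨i, hi, hit⟩ := cnt_ivt S (n-1) t (by rw [cnt_all S (n-1) (le_refl _)]; omega)
      have hin : i < n := by omega
      refine ⟨α ⟨i, hin⟩, ⟨⟨i, hin⟩, rfl⟩, ?_⟩
      have hv := val_eq hn hα i hin
      rw [← hS, ← ha] at hv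
      rw [hv, hit]
  have h1 : (Finset.image Fin.val (Finset.univ.image α)).card = (Finset.univ.image α).card :=
    Finset.card_image_of_injective _ Fin.val_injective
  have h2 : (Finset.image (fun t => a + t) (Finset.range (S.card + 1))).card = S.card + 1 := by
    rw [Finset.card_image_of_injective _ (add_right_injective a), Finset.card_range]
  rw [← h1, key, h2]

/-- the weak endomorphism built from a start value and jump set -/
def αOf (S : Finset (Fin (n-1))) (a : ℕ) (ha : a + S.card < n) : Fin n → Fin n :=
  fun i => ⟨a + cnt S i.val, by have := cnt_le_card S i.val; omega⟩

lemma wEnd_αOf (S : Finset (Fin (n-1))) (a : ℕ) (ha : a + S.card < n) :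
    wEnd n (αOf S a ha) := by
  intro u v huv hne
  have hd : (S.filter (fun (j : Fin (n-1)) => (j:ℕ) = (u:ℕ))).card ≤ 1 := by
    apply Finset.card_le_one.mpr
    intro x hx y hy
    simp only [Finset.mem_filter] at hx hy
    exact Fin.ext (by omega)
  have hne' : cnt S v.val ≠ cnt S u.val := by
    intro hc
    exact hne (Fin.ext (by simp only [αOf, hc]))
  rw [huv, cnt_succ] at hne'
  show a + cnt S v.val = a + cnt S u.val + 1
  rw [huv, cnt_succ]
  omega

lemma Sof_αOf (hn : 1 ≤ n) (S : Finset (Fin (n-1))) (a : ℕ) (ha : a + S.card < n) :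
    Sof hn (αOf S a ha) = S := by
  ext j
  have hd := dcnt_eq S j
  have hcs := cnt_succ S j.val
  simp only [Sof, Finset.mem_filter, Finset.mem_univ, true_and, αOf, ne_eq, Fin.mk.injEq]
  by_cases h : j ∈ S
  · rw [if_pos h] at hd
    simp only [h, iff_true]
    omega
  · rw [if_neg h] at hd
    simp only [h, iff_false, not_not]
    omega

end StmtAux

open StmtAux in
theorem stmt_6 (n k : ℕ) (hn : 1 ≤ n) (hk1 : 1 ≤ k) (hkn : k ≤ n) :
    Nat.card {α : Fin n → Fin n // wEnd n α ∧ (Finset.univ.image α).card = k} =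
      (n - k + 1) * Nat.choose (n - 1) (k - 1) := by
  classical
  have hbound : ∀ (p : Fin (n-k+1) × {S : Finset (Fin (n-1)) // S.card = k-1}),
      (p.1 : ℕ) + (p.2 : Finset (Fin (n-1))).card < n := by
    rintro ⟨a, S, hS⟩
    have := a.isLt
    simp only [hS]
    omega
  set F : Fin (n-k+1) × {S : Finset (Fin (n-1)) // S.card = k-1} →
      {α : Fin n → Fin n // wEnd n α ∧ (Finset.univ.image α).card = k} :=
    fun p => ⟨αOf p.2.1 p.1.1 (hbound p), wEnd_αOf _ _ _, by
      rw [image_card hn (wEnd_αOf _ _ _), Sof_αOf hn, p.2.2]; omega⟩ with hF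
  have hinj : Function.Injective F := by
    rintro ⟨a, S, hS⟩ ⟨a', S', hS'⟩ h
    have heq : αOf S a (hbound (a, ⟨S, hS⟩)) = αOf S' a' (hbound (a', ⟨S', hS'⟩)) := by
      simpa [hF, Subtype.ext_iff] using h
    have ha : (a : ℕ) = (a' : ℕ) := by
      have h0 := congrFun heq ⟨0, by omega⟩
      simpa [αOf, cnt_zero, Fin.ext_iff] using h0
    have hSeq : S = S' := by
      have h1 := Sof_αOf hn S a.val (hbound (a, ⟨S, hS⟩))
      have h2 := Sof_αOf hn S' a'.val (hbound (a', ⟨S', hS'⟩))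
      rw [← h1, ← h2, heq]
    simp only [Prod.mk.injEq, Subtype.mk.injEq]
    exact ⟨Fin.ext ha, hSeq⟩
  have hsurj : Function.Surjective F := by
    rintro ⟨α, hw, hc⟩
    have hScard : (Sof hn α).card = k - 1 := by
      have h1 := image_card hn hw
      rw [hc] at h1
      omega
    have hlast : (α ⟨0, by omega⟩ : ℕ) + (Sof hn α).card < n := by
      have h1 := val_eq hn hw (n-1) (by omega)
      rw [cnt_all (Sof hn α) (n-1) (le_refl _)] at h1
      have h2 := (α ⟨n-1, by omega⟩).isLt
      omega
    have haval : (α ⟨0, by omega⟩ : ℕ) < n - k + 1 := by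
      rw [hScard] at hlast
      omega
    refine ⟨(⟨(α ⟨0, by omega⟩ : ℕ), haval⟩, ⟨Sof hn α, hScard⟩), ?_⟩
    apply Subtype.ext
    funext i
    apply Fin.ext
    have hv := val_eq hn hw i.val i.isLt
    simp only [Fin.eta] at hv
    show (α ⟨0, by omega⟩ : ℕ) + cnt (Sof hn α) i.val = (α i : ℕ)
    omega
  rw [Nat.card_congr (Equiv.ofBijective F ⟨hinj, hsurj⟩).symm, Nat.card_prod,
    Nat.card_eq_fintype_card, Nat.card_eq_fintype_card, Fintype.card_fin,
    Fintype.card_finset_len, Fintype.card_fin]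
end

section
/- A weak endomorphism α of P⃗ₙ is a regular element of the monoid wEnd P⃗ₙ (under composition) if and only if for every x in the image of α with |α⁻¹(x)| > 1, x is the minimum or the maximum of the image of α. -/
/-!
A weak endomorphism `α` of the directed path is monotone and moves by at most one step at a
time, so its image is the whole interval `[α 0, α (n-1)]` and its fibres are intervals.

If `α β α = α`, then `β` maps each image point `x` into its fibre. For an interior point
`x`, the points `β (x - 1)`, `β x`, `β (x + 1)` lie in three different fibres, so they are
consecutive, and any preimage of `x` is squeezed between the outer two: the fibre of `x` is
`{β x}`.

Conversely, if all interior fibres are singletons, the points `L, L + 1, …, L + (b - a)`,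
where `L` is the last preimage of `a = α 0` and `b = α (n-1)`, are mapped onto `a, …, b`.
So the clamped shift `c ↦ L + (min c b - a)` is a weak endomorphism and an inner inverse
of `α`.
-/

theorem Monotone.isLeast_range_iff {ι κ : Type*} [Preorder ι] [OrderBot ι] [PartialOrder κ]
    {f : ι → κ} (hf : Monotone f) {x : κ} : IsLeast (Set.range f) x ↔ x = f ⊥ := by
  refine ⟨fun ⟨⟨y, hy⟩, hle⟩ => le_antisymm (hle ⟨⊥, rfl⟩) (hy ▸ hf bot_le), ?_⟩
  rintro rfl
  exact ⟨⟨⊥, rfl⟩, Set.forall_mem_range.2 fun _ => hf bot_le⟩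

theorem Monotone.isGreatest_range_iff {ι κ : Type*} [Preorder ι] [OrderTop ι] [PartialOrder κ]
    {f : ι → κ} (hf : Monotone f) {x : κ} : IsGreatest (Set.range f) x ↔ x = f ⊤ :=
  hf.dual.isLeast_range_iff

namespace wEnd

variable {n : ℕ} {α : Fin n → Fin n}

theorem le_and_le_add_one (hα : wEnd n α) {u v : Fin n} (h : (v : ℕ) = u + 1) :
    α u ≤ α v ∧ (α v : ℕ) ≤ α u + 1 := by
  by_cases he : α u = α v
  · simp [he]
  · have := hα u v h he
    exact ⟨Fin.le_def.2 (by omega), this.le⟩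

theorem monotone (hα : wEnd n α) : Monotone α := by
  cases n with
  | zero => exact fun i => i.elim0
  | succ m => exact Fin.monotone_iff_le_succ.2 fun i => (hα.le_and_le_add_one (by simp)).1

theorem exists_apply_eq {m : ℕ} {α : Fin (m + 1) → Fin (m + 1)} (hα : wEnd (m + 1) α)
    {c : ℕ} {i : Fin (m + 1)} (h0 : (α 0 : ℕ) ≤ c) (hi : c ≤ α i) : ∃ y, (α y : ℕ) = c := by
  induction i using Fin.induction generalizing c with
  | zero => exact ⟨0, by omega⟩
  | succ i ih =>
    have hstep := hα.le_and_le_add_one (u := i.castSucc) (v := i.succ) (by simp)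
    by_cases hci : c ≤ α i.castSucc
    · exact ih h0 hci
    · exact ⟨i.succ, by omega⟩

theorem eq_of_regular {m : ℕ} {α β : Fin (m + 1) → Fin (m + 1)} (hα : wEnd (m + 1) α)
    (hβ : wEnd (m + 1) β) (hreg : ∀ x, α (β (α x)) = α x) {y : Fin (m + 1)}
    (h0 : α 0 < α y) (hlast : α y < α (Fin.last m)) : y = β (α y) := by
  rw [Fin.lt_def] at h0 hlast
  obtain ⟨u, hu⟩ := hα.exists_apply_eq (c := α y - 1) (i := y) (by omega) (by omega)
  obtain ⟨w, hw⟩ := hα.exists_apply_eq (c := α y + 1) (by omega) hlast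
  have consecutive : ∀ s t, (α t : ℕ) = α s + 1 → (β (α t) : ℕ) = β (α s) + 1 := by
    intro s t hst
    refine hβ _ _ hst fun he => ?_
    have := congrArg (Fin.val ∘ α) he
    simp only [Function.comp_apply, hreg] at this
    omega
  have hu' : β (α u) < y := hα.monotone.reflect_lt (by rw [hreg, Fin.lt_def]; omega)
  have hw' : y < β (α w) := hα.monotone.reflect_lt (by rw [hreg, Fin.lt_def]; omega)
  have hyu := consecutive u y (by omega)
  have hwy := consecutive y w (by omega)
  rw [Fin.lt_def] at hu' hw'
  exact Fin.ext (by omega)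

theorem exists_apply_eq_add {m : ℕ} {α : Fin (m + 1) → Fin (m + 1)} (hα : wEnd (m + 1) α)
    (hfib : ∀ y z, α y = α z → α 0 < α y → α y < α (Fin.last m) → y = z)
    {L : Fin (m + 1)} (hL : α L = α 0) (hLmax : ∀ y, α y = α 0 → y ≤ L) :
    ∀ k ≤ (α (Fin.last m) : ℕ) - α 0, ∃ y : Fin (m + 1), (y : ℕ) = L + k ∧ (α y : ℕ) = α 0 + k
  | 0, _ => ⟨L, rfl, by rw [hL]; rfl⟩
  | k + 1, hk => by
    obtain ⟨y, hy, hαy⟩ := exists_apply_eq_add hα hfib hL hLmax k (by omega)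
    have hy_lt : y < Fin.last m := hα.monotone.reflect_lt (by rw [Fin.lt_def]; omega)
    rw [Fin.lt_def, Fin.val_last] at hy_lt
    set z : Fin (m + 1) := ⟨y + 1, by omega⟩
    have hz : (z : ℕ) = y + 1 := rfl
    obtain ⟨hyz, hzy⟩ := hα.le_and_le_add_one hz
    refine ⟨z, by omega, ?_⟩
    by_contra hne
    have hαz : α z = α y := Fin.ext (by rw [Fin.le_def] at hyz; omega)
    rcases k with _ | k
    · have := Fin.le_def.1 (hLmax z (by rw [hαz]; exact Fin.ext (by omega)))
      omega
    · have := hfib y z hαz.symm (by rw [Fin.lt_def]; omega) (by rw [Fin.lt_def]; omega)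
      exact absurd (congrArg Fin.val this) (by omega)

theorem exists_regular {m : ℕ} {α : Fin (m + 1) → Fin (m + 1)} (hα : wEnd (m + 1) α)
    (hfib : ∀ y z, α y = α z → α 0 < α y → α y < α (Fin.last m) → y = z) :
    ∃ β, wEnd (m + 1) β ∧ ∀ x, α (β (α x)) = α x := by
  set a : ℕ := (α 0 : ℕ)
  set b : ℕ := (α (Fin.last m) : ℕ)
  obtain ⟨L, hL, hLmax⟩ : ∃ L, α L = α 0 ∧ ∀ y, α y = α 0 → y ≤ L :=
    let s := Finset.univ.filter fun y => α y = α 0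
    have hs : s.Nonempty := ⟨0, by simp [s]⟩
    ⟨s.max' hs, (Finset.mem_filter.1 (s.max'_mem hs)).2,
      fun y hy => s.le_max' y (by simp [s, hy])⟩
  have chain := exists_apply_eq_add hα hfib hL hLmax
  obtain ⟨top, htop, -⟩ := chain (b - a) le_rfl
  have htop_lt := top.isLt
  refine ⟨fun c => ⟨L + (min (c : ℕ) b - a), by omega⟩, fun u v huv hne => ?_, fun x => ?_⟩
  · simp only [ne_eq, Fin.ext_iff] at hne ⊢
    omega
  · have hax : a ≤ α x := hα.monotone (Fin.zero_le x)
    have hxb : (α x : ℕ) ≤ b := hα.monotone (Fin.le_last x)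
    obtain ⟨y, hy, hαy⟩ := chain (α x - a) (by omega)
    dsimp only
    rw [show (⟨L + (min (α x : ℕ) b - a), _⟩ : Fin (m + 1)) = y from Fin.ext (by dsimp only; omega)]
    exact Fin.ext (by omega)

end wEnd

theorem stmt_7_general (n : ℕ) (α : Fin n → Fin n) (hα : wEnd n α) :
    (∃ β : Fin n → Fin n, wEnd n β ∧ ∀ x, α (β (α x)) = α x) ↔
      ∀ x ∈ Set.range α, 1 < Set.ncard {y | α y = x} →
        IsLeast (Set.range α) x ∨ IsGreatest (Set.range α) x := by
  rcases n with _ | m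
  · exact iff_of_true ⟨α, fun u => u.elim0, fun x => x.elim0⟩ fun x => x.elim0
  simp only [hα.monotone.isLeast_range_iff, hα.monotone.isGreatest_range_iff, bot_eq_zero,
    Fin.top_eq_last, Set.forall_mem_range, Set.one_lt_ncard_iff (Set.toFinite _),
    Set.mem_ofPred_eq]
  constructor
  · rintro ⟨β, hβ, hreg⟩ i ⟨y, z, hy, hz, hne⟩
    by_contra! hi
    have h0 : α 0 < α i := (hα.monotone (Fin.zero_le i)).lt_of_ne' hi.1
    have hlast : α i < α (Fin.last m) := (hα.monotone (Fin.le_last i)).lt_of_ne hi.2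
    refine hne ?_
    rw [hα.eq_of_regular hβ hreg (y := y) (hy ▸ h0) (hy ▸ hlast),
      hα.eq_of_regular hβ hreg (y := z) (hz ▸ h0) (hz ▸ hlast), hy, hz]
  · refine fun h => hα.exists_regular fun y z hyz h0 hlast => by_contra fun hne => ?_
    rcases h y ⟨y, z, rfl, hyz.symm, hne⟩ with h' | h'
    · exact h0.ne' h'
    · exact hlast.ne h'

/-- Regularity of `α` in the monoid `wEnd P⃗ₙ` (left-to-right composition:
`α β α = α` means `∀ x, α (β (α x)) = α x`), iff every image point with more
than one preimage is the minimum or maximum of the image. -/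
theorem stmt_7 (n : ℕ) (hn : 1 ≤ n) (α : Fin n → Fin n) (hα : wEnd n α) :
    (∃ β : Fin n → Fin n, wEnd n β ∧ ∀ x, α (β (α x)) = α x) ↔
      ∀ x ∈ Set.range α, 1 < Set.ncard {y | α y = x} →
        IsLeast (Set.range α) x ∨ IsGreatest (Set.range α) x :=
  stmt_7_general n α hα
end

section
/- The monoid wEnd P⃗ₙ of weak endomorphisms of the directed path P⃗ₙ is regular if and only if n ≤ 3. -/
instance (n : ℕ) (α : Fin n → Fin n) : Decidable (wEnd n α) := by
  unfold wEnd; infer_instance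

theorem stmt_8 (n : ℕ) (hn : 1 ≤ n) :
    (∀ α : Fin n → Fin n, wEnd n α →
        ∃ β : Fin n → Fin n, wEnd n β ∧ ∀ x, α (β (α x)) = α x) ↔ n ≤ 3 := by
  constructor
  · intro h
    by_contra hn4
    push_neg at hn4
    have h4 : 4 ≤ n := hn4
    set α : Fin n → Fin n := fun i =>
      if (i : ℕ) = n - 1 then ⟨2, by omega⟩ else ⟨min (i : ℕ) 1, by omega⟩ with hαdef
    have hval : ∀ j : Fin n, (α j : ℕ) = if (j : ℕ) = n - 1 then 2 else min (j : ℕ) 1 := by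
      intro j
      simp only [hαdef]
      split <;> rfl
    have hα : wEnd n α := by
      intro u v huv hne
      have hvlt := v.isLt
      have hnev : (α u : ℕ) ≠ (α v : ℕ) := fun hc => hne (Fin.ext hc)
      rw [hval, hval] at hnev
      rw [hval, hval]
      split_ifs at hnev ⊢ <;> omega
    obtain ⟨β, hβ, heq⟩ := h α hα
    set z : Fin n := ⟨0, by omega⟩ with hzdef
    set o : Fin n := ⟨1, by omega⟩ with hodef
    set t : Fin n := ⟨2, by omega⟩ with htdef
    set l : Fin n := ⟨n - 1, by omega⟩ with hldef
    have zv : (z : ℕ) = 0 := rfl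
    have ov : (o : ℕ) = 1 := rfl
    have tv : (t : ℕ) = 2 := rfl
    have lv : (l : ℕ) = n - 1 := rfl
    have hz : α z = z := by
      apply Fin.ext; rw [hval, zv]; split <;> omega
    have hl : α l = t := by
      apply Fin.ext; rw [hval, lv, tv]; split <;> omega
    have f0 : (β z : ℕ) = 0 := by
      have := congrArg Fin.val (heq z)
      rw [hz, hval, zv] at this
      split at this <;> omega
    have f1 : (β t : ℕ) = n - 1 := by
      have h2 := heq l
      rw [hl] at h2
      have := congrArg Fin.val h2
      rw [hval, tv] at this
      split at this <;> omega
    have g1 : (β o : ℕ) = (β z : ℕ) ∨ (β o : ℕ) = (β z : ℕ) + 1 := by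
      by_cases hc : β z = β o
      · left; exact (congrArg Fin.val hc).symm
      · right; exact hβ z o (by rw [ov, zv]) hc
    have g2 : (β t : ℕ) = (β o : ℕ) ∨ (β t : ℕ) = (β o : ℕ) + 1 := by
      by_cases hc : β o = β t
      · left; exact (congrArg Fin.val hc).symm
      · right; exact hβ o t (by rw [ov, tv]) hc
    omega
  · intro h3 α hα
    revert α hα
    interval_cases n <;> decide
end

section
/- The number of idempotent elements of the monoid wEnd P⃗ₙ is n(n+1)/2. -/
lemma wEnd_step {n : ℕ} {α : Fin n → Fin n} (h : wEnd n α) (u v : Fin n)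
    (huv : (v : ℕ) = (u : ℕ) + 1) : (α v : ℕ) = α u ∨ (α v : ℕ) = α u + 1 := by
  by_cases he : α u = α v
  · left; rw [he]
  · right; exact h u v huv he

lemma wEnd_mono {n : ℕ} {α : Fin n → Fin n} (h : wEnd n α) :
    ∀ k : ℕ, ∀ u v : Fin n, (v : ℕ) = (u : ℕ) + k →
      (α u : ℕ) ≤ α v ∧ (α v : ℕ) ≤ α u + k := by
  intro k
  induction k with
  | zero =>
    intro u v hv
    have : u = v := Fin.ext (by omega)
    subst this; simp
  | succ k ih =>
    intro u v hv
    have hvlt := v.isLt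
    have hw : (u : ℕ) + k < n := by omega
    set w : Fin n := ⟨(u : ℕ) + k, hw⟩ with hwdef
    obtain ⟨h1, h2⟩ := ih u w rfl
    have hstep := wEnd_step h w v (by simp only [hwdef]; omega)
    rcases hstep with h3 | h3 <;> exact ⟨by omega, by omega⟩

lemma wEnd_le {n : ℕ} {α : Fin n → Fin n} (h : wEnd n α) {u v : Fin n}
    (huv : u ≤ v) : α u ≤ α v := by
  have := (wEnd_mono h ((v : ℕ) - u) u v (by have := Fin.le_def.mp huv; omega)).1
  exact Fin.le_def.mpr this

lemma wEnd_lip {n : ℕ} {α : Fin n → Fin n} (h : wEnd n α) {u v : Fin n}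
    (huv : u ≤ v) : (α v : ℕ) ≤ α u + ((v : ℕ) - u) :=
  (wEnd_mono h ((v : ℕ) - u) u v (by have := Fin.le_def.mp huv; omega)).2

def clampF (n : ℕ) (a b : Fin n) : Fin n → Fin n := fun u => max a (min b u)

lemma fin_val_max {n : ℕ} (a b : Fin n) : ((max a b : Fin n) : ℕ) = max (a : ℕ) (b : ℕ) := by
  rcases le_total a b with h | h
  · rw [max_eq_right h, max_eq_right (Fin.le_def.mp h)]
  · rw [max_eq_left h, max_eq_left (Fin.le_def.mp h)]

lemma fin_val_min {n : ℕ} (a b : Fin n) : ((min a b : Fin n) : ℕ) = min (a : ℕ) (b : ℕ) := by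
  rcases le_total a b with h | h
  · rw [min_eq_left h, min_eq_left (Fin.le_def.mp h)]
  · rw [min_eq_right h, min_eq_right (Fin.le_def.mp h)]

lemma clampF_val {n : ℕ} (a b u : Fin n) :
    (clampF n a b u : ℕ) = max (a : ℕ) (min (b : ℕ) (u : ℕ)) := by
  simp only [clampF, fin_val_max, fin_val_min]

lemma clampF_mem {n : ℕ} {a b : Fin n} (hab : a ≤ b) (u : Fin n) :
    wEnd n (clampF n a b) ∧ clampF n a b ∘ clampF n a b = clampF n a b := by
  have hab' : (a : ℕ) ≤ b := hab
  constructor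
  · intro x y hxy hne
    have hne' : (clampF n a b x : ℕ) ≠ clampF n a b y := fun h => hne (Fin.ext h)
    have hx := clampF_val a b x
    have hy := clampF_val a b y
    omega
  · funext x
    apply Fin.ext
    show (clampF n a b (clampF n a b x) : ℕ) = clampF n a b x
    rw [clampF_val a b (clampF n a b x), clampF_val a b x]
    have := clampF_val a b x
    omega

noncomputable def idemEquiv (n : ℕ) (hn : 1 ≤ n) :
    {p : Fin n × Fin n // p.1 ≤ p.2} ≃ {α : Fin n → Fin n // wEnd n α ∧ α ∘ α = α} where
  toFun p := ⟨clampF n p.1.1 p.1.2, clampF_mem p.2 ⟨0, hn⟩⟩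
  invFun α := ⟨(α.1 ⟨0, hn⟩, α.1 ⟨n - 1, by omega⟩),
    wEnd_le α.2.1 (Fin.le_def.mpr (by simp))⟩
  left_inv := by
    rintro ⟨⟨a, b⟩, hab⟩
    have hab' : (a : ℕ) ≤ b := hab
    have hbn := b.isLt
    apply Subtype.ext
    dsimp only
    have e1 : clampF n a b ⟨0, hn⟩ = a := by
      apply Fin.ext; rw [clampF_val]; simp <;> omega
    have e2 : clampF n a b ⟨n - 1, by omega⟩ = b := by
      apply Fin.ext; rw [clampF_val]; simp <;> omega
    rw [e1, e2]
  right_inv := by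
    rintro ⟨α, hw, hi⟩
    dsimp only
    have hfix : ∀ x : Fin n, α (α x) = α x := fun x => congrFun hi x
    set a : Fin n := α ⟨0, hn⟩ with ha
    set b : Fin n := α ⟨n - 1, by omega⟩ with hb
    have hfa : α a = a := hfix _
    have hfb : α b = b := hfix _
    apply Subtype.ext
    funext u
    apply Fin.ext
    show (clampF n a b u : ℕ) = α u
    rw [clampF_val]
    -- general facts
    have h0u : (⟨0, hn⟩ : Fin n) ≤ u := Fin.le_def.mpr (by simp)
    have hun : u ≤ (⟨n - 1, by omega⟩ : Fin n) := Fin.le_def.mpr (by simp; omega)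
    have h1 : (a : ℕ) ≤ α u := wEnd_le hw h0u
    have h2 : (α u : ℕ) ≤ b := wEnd_le hw hun
    rcases le_or_gt (u : ℕ) (a : ℕ) with hc | hc
    · -- u ≤ a : α u = a
      have h3 : (α u : ℕ) ≤ α a := wEnd_le hw (Fin.le_def.mpr hc)
      rw [hfa] at h3
      omega
    · rcases le_or_gt (b : ℕ) (u : ℕ) with hc2 | hc2
      · -- b ≤ u : α u = b
        have h3 : (α b : ℕ) ≤ α u := wEnd_le hw (Fin.le_def.mpr hc2)
        rw [hfb] at h3
        omega
      · -- a < u < b : α u = u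
        have h3 : (α u : ℕ) ≤ α a + ((u : ℕ) - a) := wEnd_lip hw (Fin.le_def.mpr (le_of_lt hc))
        have h4 : (α b : ℕ) ≤ α u + ((b : ℕ) - u) := wEnd_lip hw (Fin.le_def.mpr (le_of_lt hc2))
        rw [hfa] at h3
        rw [hfb] at h4
        omega

def pairEquiv (n : ℕ) : {p : Fin n × Fin n // p.1 ≤ p.2} ≃ (Σ b : Fin n, Fin ((b : ℕ) + 1)) where
  toFun p := ⟨p.1.2, ⟨p.1.1, Nat.lt_succ_of_le p.2⟩⟩
  invFun s := ⟨(⟨(s.2 : ℕ), by have := s.1.isLt; have := s.2.isLt; omega⟩, s.1),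
    Fin.le_def.mpr (Nat.lt_succ_iff.mp s.2.isLt)⟩
  left_inv := by rintro ⟨⟨a, b⟩, hab⟩; rfl
  right_inv := by rintro ⟨b, c⟩; rfl

theorem stmt_9 (n : ℕ) (hn : 1 ≤ n) :
    Nat.card {α : Fin n → Fin n // wEnd n α ∧ α ∘ α = α} = n * (n + 1) / 2 := by
  rw [← Nat.card_congr (idemEquiv n hn), Nat.card_congr (pairEquiv n)]
  rw [Nat.card_eq_fintype_card, Fintype.card_sigma]
  simp only [Fintype.card_fin]
  rw [Fin.sum_univ_eq_sum_range (fun i => i + 1) n]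
  have h2 : (∑ i ∈ Finset.range n, (i + 1)) * 2 = n * (n + 1) := by
    have h1 : (∑ i ∈ Finset.range (n + 1), i) * 2 = (n + 1) * n := by
      simpa using Finset.sum_range_id_mul_two (n + 1)
    have hs : ∑ i ∈ Finset.range (n + 1), i = ∑ i ∈ Finset.range n, (i + 1) := by
      rw [Finset.sum_range_succ' (fun i => i) n]
      simp
    rw [hs] at h1
    exact h1.trans (Nat.mul_comm _ _)
  omega
end

section
/- Every idempotent weak endomorphism of P⃗ₙ has the form: for some k ≥ 0 and 1 ≤ i ≤ n−k, α maps x to i for x ≤ i, x to x for i ≤ x ≤ i+k, and x to i+k for x ≥ i+k; equivalently, the idempotents of wEnd P⃗ₙ are in bijection with the non-empty intervals of {1,…,n}. -/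
lemma step_bound (g : ℕ → ℕ) (h : ∀ m, g (m+1) = g m ∨ g (m+1) = g m + 1) :
    ∀ a d, g a ≤ g (a+d) ∧ g (a+d) ≤ g a + d := by
  intro a d
  induction d with
  | zero => simp
  | succ d ih =>
    have hrw : a + (d+1) = (a+d) + 1 := by omega
    rw [hrw]
    rcases h (a+d) with h' | h' <;> omega

/-- Identifying vertex `x : Fin n` with `x+1 ∈ {1,…,n}`: `α` is an idempotent weak
endomorphism iff it clamps `{1,…,n}` onto a nonempty interval `{i,…,i+k}`. -/
theorem stmt_10 (n : ℕ) (hn : 1 ≤ n) (α : Fin n → Fin n) :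
    (wEnd n α ∧ α ∘ α = α) ↔
      ∃ i k : ℕ, 1 ≤ i ∧ i + k ≤ n ∧
        ∀ x : Fin n, (α x : ℕ) + 1 = min (max ((x : ℕ) + 1) i) (i + k) := by
  constructor
  · rintro ⟨hw, hid⟩
    set g : ℕ → ℕ := fun m => (α ⟨min m (n-1), by omega⟩ : ℕ) with hgdef
    have gcongr : ∀ m m', min m (n-1) = min m' (n-1) → g m = g m' := by
      intro m m' h
      exact congrArg (fun z : Fin n => (α z : ℕ)) (Fin.ext h)
    have hgx : ∀ x : Fin n, g (x : ℕ) = (α x : ℕ) := by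
      intro x
      have hx := x.isLt
      have h1 : min (x : ℕ) (n-1) = x := by omega
      show (α ⟨min (x : ℕ) (n-1), _⟩ : ℕ) = (α x : ℕ)
      exact congrArg (fun z : Fin n => (α z : ℕ)) (Fin.ext h1)
    have hstep : ∀ m, g (m+1) = g m ∨ g (m+1) = g m + 1 := by
      intro m
      by_cases hm : m + 1 ≤ n - 1
      · set u : Fin n := ⟨m, by omega⟩
        set v : Fin n := ⟨m+1, by omega⟩
        have hu : g m = (α u : ℕ) := hgx u
        have hv : g (m+1) = (α v : ℕ) := hgx v
        by_cases he : α u = α v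
        · left; rw [hu, hv, he]
        · right; rw [hu, hv]; exact hw u v rfl he
      · left
        exact gcongr (m+1) m (by omega)
    have hglt : ∀ m, g m < n := fun m => (α _).isLt
    have hgg : ∀ m, g (g m) = g m := by
      intro m
      have := hgx (α ⟨min m (n-1), by omega⟩)
      have hfix : α (α ⟨min m (n-1), by omega⟩) = α ⟨min m (n-1), by omega⟩ :=
        congrFun hid _
      calc g (g m) = (α (α ⟨min m (n-1), by omega⟩) : ℕ) := this
        _ = g m := by rw [hfix]
    have mono : ∀ p q, p ≤ q → g p ≤ g q ∧ g q ≤ g p + (q - p) := by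
      intro p q hpq
      have := step_bound g hstep p (q - p)
      have hrw : p + (q - p) = q := by omega
      rw [hrw] at this
      exact this
    set a := g 0 with ha
    set b := g (n-1) with hb
    have hfa : g a = a := hgg 0
    have hfb : g b = b := hgg (n-1)
    have hab : a ≤ b := (mono 0 (n-1) (by omega)).1
    have hlea : ∀ m, a ≤ g m := fun m => (mono 0 m (by omega)).1
    have hleb : ∀ m, g m ≤ b := by
      intro m
      have h1 := hglt m
      have := (mono (g m) (n-1) (by omega)).1
      rw [hgg] at this
      exact this
    have hclamp : ∀ m, g m = min (max m a) b := by
      intro m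
      rcases le_or_gt m a with hma | hma
      · have h1 := (mono m a hma).1
        rw [hfa] at h1
        have h2 := hlea m
        omega
      · rcases le_or_gt m b with hmb | hmb
        · have h1 := (mono a m (by omega)).2
          rw [hfa] at h1
          have h2 := (mono m b hmb).2
          rw [hfb] at h2
          omega
        · have h1 := (mono b m (by omega)).1
          rw [hfb] at h1
          have h2 := hleb m
          omega
    refine ⟨a + 1, b - a, by omega, by have := hglt (n-1); omega, ?_⟩
    intro x
    have h1 := hclamp (x : ℕ)
    rw [hgx x] at h1
    omega
  · rintro ⟨i, k, hi, hik, hc⟩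
    constructor
    · intro u v huv hne
      have hne' : (α u : ℕ) ≠ (α v : ℕ) := fun h => hne (Fin.ext h)
      have h1 := hc u
      have h2 := hc v
      omega
    · funext x
      apply Fin.ext
      show (α (α x) : ℕ) = (α x : ℕ)
      have h1 := hc x
      have h2 := hc (α x)
      omega
end

section
/- The weak endomorphisms of P⃗ₙ with image of size exactly n−1 are precisely the maps αᵢ (which sends x to x for x ≤ i and x to x−1 for x > i) and βᵢ (which sends x to x+1 for x ≤ i and x to x for x > i), for i = 1,…,n−1. -/
/-- In one-based terms, `amap n i` sends `x ↦ x` for `x ≤ i` and `x ↦ x - 1` for `x > i`. -/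
def amap (n i : ℕ) : Fin n → Fin n :=
  fun x => if (x : ℕ) + 1 ≤ i then x
           else ⟨(x : ℕ) - 1, lt_of_le_of_lt (Nat.sub_le _ _) x.isLt⟩

/-- In one-based terms, `bmap n i` (for `i ≤ n - 1`) sends `x ↦ x + 1` for `x ≤ i`
and `x ↦ x` for `x > i`. -/
def bmap (n i : ℕ) : Fin n → Fin n :=
  fun x => if (x : ℕ) + 1 ≤ i then ⟨min ((x : ℕ) + 1) (n - 1), by have := x.isLt; omega⟩
           else x

namespace Stmt11Aux

variable (n : ℕ) (α : Fin n → Fin n)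

def A (k : ℕ) : ℕ := if h : k < n then (α ⟨k, h⟩ : ℕ) else 0

lemma A_eq (k : ℕ) (hk : k < n) : A n α k = (α ⟨k, hk⟩ : ℕ) := by simp [A, hk]

lemma A_lt (k : ℕ) (hk : k < n) : A n α k < n := by
  rw [A_eq n α k hk]; exact (α ⟨k, hk⟩).isLt

lemma A_step (hα : wEnd n α) (k : ℕ) (hk : k + 1 < n) :
    A n α (k + 1) = A n α k ∨ A n α (k + 1) = A n α k + 1 := by
  have hk' : k < n := by omega
  rw [A_eq n α (k+1) hk, A_eq n α k hk']
  by_cases h : α ⟨k, hk'⟩ = α ⟨k+1, hk⟩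
  · left; rw [h]
  · right; exact hα ⟨k, hk'⟩ ⟨k+1, hk⟩ rfl h

lemma A_mono (hα : wEnd n α) (k m : ℕ) (hkm : k ≤ m) (hm : m < n) :
    A n α k ≤ A n α m ∧ A n α m ≤ A n α k + (m - k) := by
  induction m with
  | zero =>
    have : k = 0 := by omega
    subst this; omega
  | succ m ih =>
    rcases Nat.eq_or_lt_of_le hkm with rfl | h
    · omega
    · have h1 := ih (by omega) (by omega)
      have h2 := A_step n α hα m hm
      omega

lemma A_ivt (hα : wEnd n α) (hn : 1 ≤ n) (v : ℕ) (h0 : A n α 0 ≤ v)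
    (h1 : v ≤ A n α (n - 1)) : ∃ k, k < n ∧ A n α k = v := by
  classical
  set P : ℕ → Prop := fun k => k < n ∧ A n α k ≤ v with hP
  have hP0 : P 0 := ⟨by omega, h0⟩
  set k0 := Nat.findGreatest P (n - 1) with hk0
  have hspec : P k0 := Nat.findGreatest_spec (Nat.zero_le _) hP0
  have hle : k0 ≤ n - 1 := Nat.findGreatest_le _
  refine ⟨k0, hspec.1, ?_⟩
  by_contra hne
  have hlt : A n α k0 < v := lt_of_le_of_ne hspec.2 hne
  have hk0lt : k0 < n - 1 := by
    rcases Nat.lt_or_ge k0 (n-1) with h | h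
    · exact h
    · have : k0 = n - 1 := by omega
      rw [this] at hlt; omega
  have hstep := A_step n α hα k0 (by omega)
  have hP1 : P (k0 + 1) := ⟨by omega, by omega⟩
  have := Nat.findGreatest_is_greatest (P := P) (n := n - 1) (k := k0 + 1)
    (by omega) (by omega)
  exact this hP1

end Stmt11Aux

open Stmt11Aux in
theorem stmt_11 (n : ℕ) (hn : 3 ≤ n) (α : Fin n → Fin n) :
    (wEnd n α ∧ (Finset.univ.image α).card = n - 1) ↔
      ∃ i : ℕ, 1 ≤ i ∧ i ≤ n - 1 ∧ (α = amap n i ∨ α = bmap n i) := by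
  constructor
  · rintro ⟨hα, hcard⟩
    have h0n : 0 < n := by omega
    have hn1 : n - 1 < n := by omega
    -- image = Icc (α 0) (α (n-1))
    have himg : Finset.univ.image α = Finset.Icc (α ⟨0, h0n⟩) (α ⟨n-1, hn1⟩) := by
      ext y
      simp only [Finset.mem_image, Finset.mem_univ, true_and, Finset.mem_Icc]
      constructor
      · rintro ⟨x, rfl⟩
        have h1 := A_mono n α hα 0 x.1 (Nat.zero_le _) x.isLt
        have h2 := A_mono n α hα x.1 (n-1) (by omega) hn1
        rw [A_eq n α 0 h0n, A_eq n α x.1 x.isLt, A_eq n α (n-1) hn1] at *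
        constructor
        · exact Fin.le_def.mpr (by simpa using h1.1)
        · exact Fin.le_def.mpr (by simpa using h2.1)
      · rintro ⟨hy1, hy2⟩
        obtain ⟨k, hk, hAk⟩ := A_ivt n α hα (by omega) y.1
          (by rw [A_eq n α 0 h0n]; exact Fin.le_def.mp hy1)
          (by rw [A_eq n α (n-1) hn1]; exact Fin.le_def.mp hy2)
        exact ⟨⟨k, hk⟩, Fin.ext (by rw [← A_eq n α k hk]; exact hAk)⟩
    rw [himg, Fin.card_Icc] at hcard
    -- basic facts
    have hm := A_mono n α hα 0 (n-1) (by omega) hn1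
    have hAlt := A_lt n α (n-1) hn1
    have hAend : A n α (n-1) = A n α 0 + (n - 2) := by
      rw [A_eq n α 0 h0n, A_eq n α (n-1) hn1] at *
      omega
    have hA0 : A n α 0 ≤ 1 := by omega
    -- find a flat step
    have hflat : ∃ j, j + 1 < n ∧ A n α (j+1) = A n α j := by
      by_contra hc
      push_neg at hc
      have hall : ∀ m, m < n → A n α m = A n α 0 + m := by
        intro m
        induction m with
        | zero => intro _; omega
        | succ m ih =>
          intro hm'
          have h1 := ih (by omega)
          have h2 := A_step n α hα m hm'
          have h3 := hc m hm'
          omega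
      have := hall (n-1) hn1
      omega
    obtain ⟨j, hj, hflat⟩ := hflat
    -- value formula
    have hval : ∀ k, (hk : k < n) → A n α k = if k ≤ j then A n α 0 + k else A n α 0 + k - 1 := by
      have hAj : A n α j = A n α 0 + j := by
        have h1 := A_mono n α hα 0 j (Nat.zero_le _) (by omega)
        have h2 := A_mono n α hα (j+1) (n-1) (by omega) hn1
        omega
      intro k hk
      by_cases hkj : k ≤ j
      · have h1 := A_mono n α hα 0 k (Nat.zero_le _) hk
        have h2 := A_mono n α hα k j hkj (by omega)
        simp only [hkj, if_pos]
        omega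
      · have h1 := A_mono n α hα (j+1) k (by omega) hk
        have h2 := A_mono n α hα k (n-1) (by omega) hn1
        simp only [hkj, if_neg, not_false_iff]
        omega
    refine ⟨j + 1, by omega, by omega, ?_⟩
    have h01 : A n α 0 = 0 ∨ A n α 0 = 1 := by omega
    rcases h01 with h0 | h0
    · -- amap
      left
      funext x
      have hv := hval x.1 x.isLt
      rw [A_eq n α x.1 x.isLt, h0] at hv
      simp only [Fin.eta] at hv
      apply Fin.ext
      by_cases hxj : (x : ℕ) ≤ j
      · rw [if_pos hxj] at hv
        simp only [amap, if_pos (show (x : ℕ) + 1 ≤ j + 1 by omega)]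
        omega
      · rw [if_neg hxj] at hv
        simp only [amap, if_neg (show ¬((x : ℕ) + 1 ≤ j + 1) by omega)]
        omega
    · -- bmap
      right
      funext x
      have hv := hval x.1 x.isLt
      rw [A_eq n α x.1 x.isLt, h0] at hv
      simp only [Fin.eta] at hv
      apply Fin.ext
      have hxlt := x.isLt
      by_cases hxj : (x : ℕ) ≤ j
      · rw [if_pos hxj] at hv
        simp only [bmap, if_pos (show (x : ℕ) + 1 ≤ j + 1 by omega)]
        omega
      · rw [if_neg hxj] at hv
        simp only [bmap, if_neg (show ¬((x : ℕ) + 1 ≤ j + 1) by omega)]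
        omega
  · rintro ⟨i, h1, h2, rfl | rfl⟩
    · constructor
      · intro u v huv hne
        by_cases hu : (u : ℕ) + 1 ≤ i <;> by_cases hv : (v : ℕ) + 1 ≤ i <;>
          simp [amap, hu, hv, Fin.ext_iff] at hne ⊢ <;> omega
      · have he : Finset.univ.image (amap n i) = Finset.univ.erase ⟨n-1, by omega⟩ := by
          ext y
          simp only [Finset.mem_image, Finset.mem_univ, true_and, Finset.mem_erase, and_true]
          constructor
          · rintro ⟨x, rfl⟩
            have hx := x.isLt
            simp only [amap, Ne, Fin.ext_iff]
            split <;> simp <;> omega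
          · intro hy
            rw [Ne, Fin.ext_iff] at hy
            simp only [Fin.val_mk] at hy
            have hy' : (y : ℕ) < n - 1 := by have := y.isLt; omega
            by_cases hyi : (y : ℕ) + 1 ≤ i
            · exact ⟨y, by simp [amap, hyi]⟩
            · refine ⟨⟨(y : ℕ) + 1, by omega⟩, ?_⟩
              simp only [amap]
              split
              · next h =>
                  exfalso
                  have h' : (y : ℕ) + 1 + 1 ≤ i := by simpa using h
                  omega
              · next h => apply Fin.ext; simp
        rw [he, Finset.card_erase_of_mem (Finset.mem_univ _)]
        simp
    · constructor
      · intro u v huv hne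
        have hun := u.isLt
        by_cases hu : (u : ℕ) + 1 ≤ i <;> by_cases hv : (v : ℕ) + 1 ≤ i <;>
          simp [bmap, hu, hv, Fin.ext_iff] at hne ⊢ <;> omega
      · have he : Finset.univ.image (bmap n i) = Finset.univ.erase ⟨0, by omega⟩ := by
          ext y
          simp only [Finset.mem_image, Finset.mem_univ, true_and, Finset.mem_erase, and_true]
          constructor
          · rintro ⟨x, rfl⟩
            have hx := x.isLt
            simp only [bmap, Ne, Fin.ext_iff]
            split <;> simp <;> omega
          · intro hy
            rw [Ne, Fin.ext_iff] at hy
            simp only [Fin.val_mk] at hy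
            have hy0 : 1 ≤ (y : ℕ) := by omega
            have hyn := y.isLt
            by_cases hyi : (y : ℕ) ≤ i
            · refine ⟨⟨(y : ℕ) - 1, by omega⟩, ?_⟩
              simp only [bmap]
              split
              · next h => apply Fin.ext; simp; omega
              · next h =>
                  exfalso
                  have h' : ¬((y : ℕ) - 1 + 1 ≤ i) := by simpa using h
                  omega
            · refine ⟨y, ?_⟩
              simp only [bmap]
              split
              · next h => exfalso; omega
              · next h => rfl
        rw [he, Finset.card_erase_of_mem (Finset.mem_univ _)]
        simp
end

section
/- For n ≥ 3, every weak endomorphism of P⃗ₙ with image of size n−1 lies in the submonoid generated by α₁,…,α_{n−2}, β_{n−1}; in particular α_{n−1} = β_{n−1}∘α₁ and βᵢ = αᵢ∘β_{n−1} for 1 ≤ i ≤ n−2 (composing left to right). -/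
lemma id2 (n : ℕ) (hn : 3 ≤ n) : amap n (n - 1) = fun x => amap n 1 (bmap n (n - 1) x) := by
  funext x
  have hx := x.isLt
  simp only [amap, bmap]
  split_ifs <;> apply Fin.ext <;> simp_all <;> omega

lemma id3 (n : ℕ) (hn : 3 ≤ n) (i : ℕ) (h1 : 1 ≤ i) (h2 : i ≤ n - 2) :
    bmap n i = fun x => bmap n (n - 1) (amap n i x) := by
  funext x
  have hx := x.isLt
  simp only [amap, bmap]
  split_ifs <;> apply Fin.ext <;> simp_all <;> omega

lemma classify (n : ℕ) (hn : 3 ≤ n) (α : Fin n → Fin n) (hw : wEnd n α)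
    (hc : (Finset.univ.image α).card = n - 1) :
    ∃ j, j + 1 < n ∧ (α = amap n (j+1) ∨ α = bmap n (j+1)) := by
  have hn0 : 0 < n := by omega
  set F : ℕ → ℕ := fun u => if h : u < n then (α ⟨u, h⟩ : ℕ) else n with hF
  have hFval : ∀ u (h : u < n), F u = (α ⟨u, h⟩ : ℕ) := by
    intro u h; simp [hF, h]
  -- step property
  have step : ∀ u, u + 1 < n → F (u+1) = F u ∨ F (u+1) = F u + 1 := by
    intro u hu
    rw [hFval u (by omega), hFval (u+1) hu]
    by_cases he : α ⟨u, by omega⟩ = α ⟨u+1, hu⟩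
    · left; rw [he]
    · right; exact hw ⟨u, by omega⟩ ⟨u+1, hu⟩ rfl he
  -- bounds
  have bounds : ∀ d u, u + d < n → F u ≤ F (u + d) ∧ F (u + d) ≤ F u + d := by
    intro d
    induction d with
    | zero => intro u _; simp
    | succ d ih =>
      intro u hu
      have h1 := ih u (by omega)
      have h2 := step (u + d) (by omega)
      have : u + (d+1) = (u+d)+1 := by omega
      rw [this]
      omega
  -- image card as nat image
  have himg : (Finset.univ.image α).card = ((Finset.univ.image α).image Fin.val).card := by
    rw [Finset.card_image_of_injective _ Fin.val_injective]
  have hsub : (Finset.univ.image α).image Fin.val ⊆ Finset.Icc (F 0) (F (n-1)) := by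
    intro m hm
    simp only [Finset.mem_image, Finset.mem_univ, true_and] at hm
    obtain ⟨y, ⟨x, rfl⟩, rfl⟩ := hm
    have hx := x.isLt
    have b1 := bounds x.1 0 (by omega)
    have b2 := bounds (n - 1 - x.1) x.1 (by omega)
    simp only [Nat.zero_add] at b1
    have hx' : x.1 + (n - 1 - x.1) = n - 1 := by omega
    rw [hx'] at b2
    have := hFval x.1 hx
    have hxx : (⟨x.1, hx⟩ : Fin n) = x := rfl
    rw [hxx] at this
    simp only [Finset.mem_Icc]
    omega
  have hcard_le : n - 1 ≤ F (n-1) - F 0 + 1 := by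
    have := Finset.card_le_card hsub
    rw [← himg, hc] at this
    have := Nat.card_Icc (F 0) (F (n-1))
    omega
  have hFtop : F (n-1) < n := by rw [hFval (n-1) (by omega)]; exact (α _).isLt
  have hmono := bounds (n-1) 0 (by omega)
  simp only [Nat.zero_add] at hmono
  -- rule out injective case : F (n-1) = F 0 + (n-1)
  have hnotinj : F (n-1) ≠ F 0 + (n - 1) := by
    intro hcontra
    have hF0 : F 0 = 0 := by omega
    have hall : ∀ u, u < n → F u = u := by
      intro u hu
      have b1 := bounds u 0 (by omega)
      have b2 := bounds (n - 1 - u) u (by omega)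
      have : u + (n - 1 - u) = n - 1 := by omega
      rw [this] at b2
      simp only [Nat.zero_add] at b1
      omega
    have hinj : Function.Injective α := by
      intro x y hxy
      have h1 := hall x.1 x.isLt
      have h2 := hall y.1 y.isLt
      rw [hFval x.1 x.isLt] at h1
      rw [hFval y.1 y.isLt] at h2
      have hxx : (⟨x.1, x.isLt⟩ : Fin n) = x := rfl
      have hyy : (⟨y.1, y.isLt⟩ : Fin n) = y := rfl
      rw [hxx] at h1; rw [hyy] at h2
      apply Fin.ext
      rw [← h1, ← h2, hxy]
    have := Finset.card_image_of_injective Finset.univ hinj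
    simp [Finset.card_univ] at this
    omega
  have hFn : F (n-1) = F 0 + (n - 2) := by omega
  have hF0le : F 0 ≤ 1 := by omega
  -- exists a flat step
  have hex : ∃ j, j + 1 < n ∧ F (j+1) = F j := by
    by_contra hno
    push_neg at hno
    have hall : ∀ u, u < n → F u = F 0 + u := by
      intro u hu
      induction u with
      | zero => rfl
      | succ k ih =>
        have := step k (by omega)
        have := hno k (by omega)
        have := ih (by omega)
        omega
    have := hall (n-1) (by omega)
    omega
  set j := Nat.find hex with hjdef
  obtain ⟨hj, hflat⟩ := Nat.find_spec hex
  have hmin : ∀ k, k < j → F (k+1) ≠ F k := by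
    intro k hk heq
    exact Nat.find_min hex hk ⟨by omega, heq⟩
  have below : ∀ u, u ≤ j → F u = F 0 + u := by
    intro u hu
    induction u with
    | zero => simp
    | succ k ih =>
      have h1 := step k (by omega)
      have h2 := hmin k (by omega)
      have h3 := ih (by omega)
      omega
  have hFj : F j = F 0 + j := below j le_rfl
  have hFj1 : F (j+1) = F 0 + j := by rw [hflat, hFj]
  have above : ∀ u, j < u → u < n → F u = F 0 + u - 1 := by
    intro u hu1 hu2
    have b1 := bounds (u - (j+1)) (j+1) (by omega)
    have e1 : j + 1 + (u - (j+1)) = u := by omega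
    rw [e1] at b1
    have b2 := bounds (n - 1 - u) u (by omega)
    have e2 : u + (n - 1 - u) = n - 1 := by omega
    rw [e2] at b2
    omega
  have hval : ∀ x : Fin n, (α x : ℕ) = F x.1 := by
    intro x
    rw [hFval x.1 x.isLt]
  refine ⟨j, hj, ?_⟩
  have hF01 : F 0 = 0 ∨ F 0 = 1 := by omega
  rcases hF01 with h0 | h0
  · left
    funext x
    apply Fin.ext
    rw [hval x]
    simp only [amap]
    have hx := x.isLt
    split_ifs with h
    · have := below x.1 (by omega); omega
    · have := above x.1 (by omega) hx; simp; omega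
  · right
    funext x
    apply Fin.ext
    rw [hval x]
    simp only [bmap]
    have hx := x.isLt
    split_ifs with h
    · have := below x.1 (by omega); simp; omega
    · have := above x.1 (by omega) hx; omega

theorem stmt_12 (n : ℕ) (hn : 3 ≤ n) :
    (∀ α : Fin n → Fin n, wEnd n α → (Finset.univ.image α).card = n - 1 →
      (α : Function.End (Fin n)) ∈
        Submonoid.closure
          ((((fun i => (amap n i : Function.End (Fin n))) '' Set.Icc 1 (n - 2)) ∪
            {(bmap n (n - 1) : Function.End (Fin n))} : Set (Function.End (Fin n))))) ∧
    (amap n (n - 1) = fun x => amap n 1 (bmap n (n - 1) x)) ∧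
    (∀ i : ℕ, 1 ≤ i → i ≤ n - 2 →
      bmap n i = fun x => bmap n (n - 1) (amap n i x)) := by
  refine ⟨?_, id2 n hn, id3 n hn⟩
  intro α hw hc
  set S : Set (Function.End (Fin n)) :=
    (((fun i => (amap n i : Function.End (Fin n))) '' Set.Icc 1 (n - 2)) ∪
      {(bmap n (n - 1) : Function.End (Fin n))}) with hS
  have hbtop : (bmap n (n-1) : Function.End (Fin n)) ∈ Submonoid.closure S :=
    Submonoid.subset_closure (Set.mem_union_right _ rfl)
  have ha : ∀ i, 1 ≤ i → i ≤ n - 2 →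
      (amap n i : Function.End (Fin n)) ∈ Submonoid.closure S :=
    fun i h1 h2 => Submonoid.subset_closure (Set.mem_union_left _ ⟨i, ⟨h1, h2⟩, rfl⟩)
  obtain ⟨j, hj, hab⟩ := classify n hn α hw hc
  rcases hab with rfl | rfl
  · by_cases h : j + 1 ≤ n - 2
    · exact ha _ (by omega) h
    · have he : j + 1 = n - 1 := by omega
      rw [he, id2 n hn]
      have hmul : ∀ f g : Function.End (Fin n), f * g = fun x => f (g x) := fun _ _ => rfl
      rw [← hmul (amap n 1) (bmap n (n-1))]
      exact Submonoid.mul_mem (M := Function.End (Fin n)) _ (ha 1 le_rfl (by omega)) hbtop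
  · by_cases h : j + 1 ≤ n - 2
    · rw [id3 n hn (j+1) (by omega) h]
      exact Submonoid.mul_mem (M := Function.End (Fin n)) _ hbtop (ha _ (by omega) h)
    · have he : j + 1 = n - 1 := by omega
      rw [he]
      exact hbtop
end

section
/- Let n ≥ 3 and let α be a weak endomorphism of P⃗ₙ with image of size k, where 1 ≤ k ≤ n−2. Then there exist weak endomorphisms γ₁, γ₂ of P⃗ₙ, each with image of size k+1, such that α = γ₁γ₂ (apply γ₁ first). -/
namespace Stmt13

variable {n : ℕ}

lemma val_congr (f : Fin n → Fin n) {a : ℕ} (ha : a < n) (x : Fin n) (e : a = (x : ℕ)) :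
    f ⟨a, ha⟩ = f x := by cases x; subst e; rfl

lemma fcongr (f : Fin n → Fin n) {a b : ℕ} (ha : a < n) (hb : b < n) (e : a = b) :
    (f ⟨a, ha⟩ : ℕ) = (f ⟨b, hb⟩ : ℕ) := by subst e; rfl

lemma step {f : Fin n → Fin n} (hf : wEnd n f) {m : ℕ} (h : m + 1 < n) :
    (f ⟨m+1, h⟩ : ℕ) = (f ⟨m, by omega⟩ : ℕ) ∨
    (f ⟨m+1, h⟩ : ℕ) = (f ⟨m, by omega⟩ : ℕ) + 1 := by
  by_cases he : f ⟨m, by omega⟩ = f ⟨m+1, h⟩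
  · left; rw [← he]
  · right; exact hf _ _ rfl he

lemma mono {f : Fin n → Fin n} (hf : wEnd n f) :
    ∀ d i (h : i + d < n), (f ⟨i, by omega⟩ : ℕ) ≤ (f ⟨i+d, h⟩ : ℕ) ∧
      (f ⟨i+d, h⟩ : ℕ) ≤ (f ⟨i, by omega⟩ : ℕ) + d := by
  intro d
  induction d with
  | zero =>
    intro i h
    have e : (f ⟨i + 0, h⟩ : ℕ) = (f ⟨i, by omega⟩ : ℕ) := fcongr f _ _ (by omega)
    omega
  | succ d ih =>
    intro i h
    have h1 := ih i (by omega)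
    have h2 := step hf (m := i + d) (by omega)
    have e : (f ⟨i + (d+1), h⟩ : ℕ) = (f ⟨i + d + 1, by omega⟩ : ℕ) := fcongr f _ _ (by omega)
    omega

lemma ivt {f : Fin n → Fin n} (hf : wEnd n f) :
    ∀ d i (h : i + d < n) (c : ℕ), (f ⟨i, by omega⟩ : ℕ) ≤ c →
      c ≤ (f ⟨i+d, h⟩ : ℕ) → ∃ x : Fin n, (f x : ℕ) = c := by
  intro d
  induction d with
  | zero =>
    intro i h c h1 h2
    have e : (f ⟨i + 0, h⟩ : ℕ) = (f ⟨i, by omega⟩ : ℕ) := fcongr f _ _ (by omega)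
    exact ⟨⟨i, by omega⟩, by omega⟩
  | succ d ih =>
    intro i h c h1 h2
    have h3 := step hf (m := i + d) (by omega)
    have e : (f ⟨i + (d+1), h⟩ : ℕ) = (f ⟨i + d + 1, by omega⟩ : ℕ) := fcongr f _ _ (by omega)
    by_cases hc : c ≤ (f ⟨i + d, by omega⟩ : ℕ)
    · exact ih i (by omega) c h1 hc
    · exact ⟨⟨i + d + 1, by omega⟩, by omega⟩

lemma image_eq (hn : 0 < n) {f : Fin n → Fin n} (hf : wEnd n f) :
    Finset.univ.image f = Finset.Icc (f ⟨0, hn⟩) (f ⟨n-1, by omega⟩) := by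
  ext x
  simp only [Finset.mem_image, Finset.mem_univ, true_and, Finset.mem_Icc, Fin.le_def]
  constructor
  · rintro ⟨y, rfl⟩
    have hy := y.isLt
    have h1 := mono hf (y : ℕ) 0 (by omega)
    have h2 := mono hf (n - 1 - y) (y : ℕ) (by omega)
    have e1 : (f ⟨0 + (y:ℕ), by omega⟩ : ℕ) = (f y : ℕ) :=
      congrArg Fin.val (val_congr f _ _ (by omega))
    have e2 : (f ⟨(y:ℕ) + (n - 1 - y), by omega⟩ : ℕ) = (f ⟨n-1, by omega⟩ : ℕ) := fcongr f _ _ (by omega)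
    have e3 : (f ⟨(y:ℕ), by omega⟩ : ℕ) = (f y : ℕ) := rfl
    exact ⟨by omega, by omega⟩
  · rintro ⟨h1, h2⟩
    have e : (f ⟨0 + (n-1), by omega⟩ : ℕ) = (f ⟨n-1, by omega⟩ : ℕ) := fcongr f _ _ (by omega)
    obtain ⟨z, hz⟩ := ivt hf (n - 1) 0 (by omega) (x : ℕ) (by omega) (by omega)
    exact ⟨z, Fin.ext hz⟩

lemma card_image (hn : 0 < n) {f : Fin n → Fin n} (hf : wEnd n f) :
    (Finset.univ.image f).card = (f ⟨n-1, by omega⟩ : ℕ) + 1 - (f ⟨0, hn⟩ : ℕ) := by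
  rw [image_eq hn hf, Fin.card_Icc]

end Stmt13

set_option maxHeartbeats 400000 in
theorem stmt_13 (n k : ℕ) (hn : 3 ≤ n) (hk1 : 1 ≤ k) (hk : k ≤ n - 2)
    (α : Fin n → Fin n) (hα : wEnd n α) (hcard : (Finset.univ.image α).card = k) :
    ∃ γ₁ γ₂ : Fin n → Fin n, wEnd n γ₁ ∧ wEnd n γ₂ ∧
      (Finset.univ.image γ₁).card = k + 1 ∧ (Finset.univ.image γ₂).card = k + 1 ∧
      α = fun x => γ₂ (γ₁ x) := by
  have hn0 : 0 < n := by omega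
  have pn1 : n - 1 < n := by omega
  -- abbreviations
  have hMk : k = (α ⟨n-1, pn1⟩ : ℕ) + 1 - (α ⟨0, hn0⟩ : ℕ) := by
    have h := Stmt13.card_image hn0 hα
    rw [hcard] at h
    exact h
  have haM : (α ⟨0, hn0⟩ : ℕ) ≤ (α ⟨n-1, pn1⟩ : ℕ) := by
    have h := Stmt13.mono hα (n-1) 0 (by omega)
    have e : (α ⟨0 + (n-1), by omega⟩ : ℕ) = (α ⟨n-1, pn1⟩ : ℕ) := Stmt13.fcongr α _ _ (by omega)
    omega
  have hbnd : ∀ x : Fin n, (α ⟨0, hn0⟩ : ℕ) ≤ (α x : ℕ) ∧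
      (α x : ℕ) ≤ (α ⟨n-1, pn1⟩ : ℕ) := by
    intro x
    have hy := x.isLt
    have h1 := Stmt13.mono hα (x : ℕ) 0 (by omega)
    have h2 := Stmt13.mono hα (n - 1 - x) (x : ℕ) (by omega)
    have e1 : (α ⟨0 + (x:ℕ), by omega⟩ : ℕ) = (α x : ℕ) :=
      congrArg Fin.val (Stmt13.val_congr α _ _ (by omega))
    have e2 : (α ⟨(x:ℕ) + (n - 1 - x), by omega⟩ : ℕ) = (α ⟨n-1, pn1⟩ : ℕ) := Stmt13.fcongr α _ _ (by omega)
    have e3 : (α ⟨(x:ℕ), by omega⟩ : ℕ) = (α x : ℕ) := rfl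
    omega
  -- existence of a constant edge
  obtain ⟨j, hj, hjeq⟩ : ∃ j, ∃ (h : j + 1 < n),
      (α ⟨j+1, h⟩ : ℕ) = (α ⟨j, by omega⟩ : ℕ) := by
    by_contra hcon
    push_neg at hcon
    have grow : ∀ d (h : d < n), (α ⟨0, hn0⟩ : ℕ) + d ≤ (α ⟨d, h⟩ : ℕ) := by
      intro d
      induction d with
      | zero => intro h; omega
      | succ d ih =>
        intro h
        have h1 := ih (by omega)
        have h2 := Stmt13.step hα (m := d) h
        have h3 := hcon d h
        omega
    have := grow (n-1) pn1
    omega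
  have pj : j < n := by omega
  set a := (α ⟨0, hn0⟩ : ℕ) with ha
  set t := min a 1 with hdeft
  set c := (α ⟨j, pj⟩ : ℕ) - a with hdefc
  have hcj := hbnd ⟨j, pj⟩
  have hb1 : ∀ x : Fin n, t + ((α x : ℕ) - a) + (if j < (x:ℕ) then 1 else 0) < n := by
    intro x
    have hb := hbnd x
    split <;> omega
  have hb2 : ∀ v : Fin n,
      min (a - t + (v:ℕ) - (if c + t < (v:ℕ) then 1 else 0)) (a + k - t) < n := by
    intro v; omega
  set γ₁ : Fin n → Fin n :=
    fun x => ⟨t + ((α x : ℕ) - a) + (if j < (x:ℕ) then 1 else 0), hb1 x⟩ with hg1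
  set γ₂ : Fin n → Fin n :=
    fun v => ⟨min (a - t + (v:ℕ) - (if c + t < (v:ℕ) then 1 else 0)) (a + k - t),
      hb2 v⟩ with hg2
  have hv1 : ∀ x : Fin n, (γ₁ x : ℕ) = t + ((α x : ℕ) - a) + (if j < (x:ℕ) then 1 else 0) := by
    intro x; rw [hg1]
  have hv2 : ∀ v : Fin n,
      (γ₂ v : ℕ) = min (a - t + (v:ℕ) - (if c + t < (v:ℕ) then 1 else 0)) (a + k - t) := by
    intro v; rw [hg2]
  have hw1 : wEnd n γ₁ := by
    intro u v huv hne
    have hne' : (γ₁ u : ℕ) ≠ (γ₁ v : ℕ) := fun h => hne (Fin.ext h)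
    rw [hv1 u, hv1 v] at hne' ⊢
    have hst : (α v : ℕ) = (α u : ℕ) ∨ (α v : ℕ) = (α u : ℕ) + 1 := by
      by_cases he : α u = α v
      · left; rw [he]
      · right; exact hα u v huv he
    have hbu := hbnd u
    have hbv := hbnd v
    rcases lt_trichotomy j (u : ℕ) with h | h | h
    · rw [if_pos h, if_pos (by omega : j < (v:ℕ))] at hne' ⊢
      omega
    · have e1 : (α u : ℕ) = (α ⟨j, pj⟩ : ℕ) :=
        congrArg Fin.val (Stmt13.val_congr α pj u h).symm
      have e2 : (α v : ℕ) = (α ⟨j+1, hj⟩ : ℕ) :=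
        congrArg Fin.val (Stmt13.val_congr α hj v (by omega)).symm
      rw [if_neg (by omega : ¬ j < (u:ℕ)), if_pos (by omega : j < (v:ℕ))] at hne' ⊢
      omega
    · rw [if_neg (by omega : ¬ j < (u:ℕ)), if_neg (by omega : ¬ j < (v:ℕ))] at hne' ⊢
      omega
  have hw2 : wEnd n γ₂ := by
    intro u v huv hne
    have hne' : (γ₂ u : ℕ) ≠ (γ₂ v : ℕ) := fun h => hne (Fin.ext h)
    rw [hv2 u, hv2 v] at hne' ⊢
    split_ifs at hne' ⊢ <;> omega
  have hc1 : (Finset.univ.image γ₁).card = k + 1 := by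
    have h := Stmt13.card_image hn0 hw1
    rw [hv1 ⟨0, hn0⟩, hv1 ⟨n-1, by omega⟩] at h
    rw [h]
    have hbl := hbnd ⟨n-1, by omega⟩
    have e0 : (α ⟨n-1, by omega⟩ : ℕ) = (α ⟨n-1, pn1⟩ : ℕ) := Stmt13.fcongr α _ _ rfl
    simp only [Fin.val_mk]
    rw [if_neg (by omega : ¬ j < 0), if_pos (by omega : j < n - 1)]
    omega
  have hc2 : (Finset.univ.image γ₂).card = k + 1 := by
    have h := Stmt13.card_image hn0 hw2
    rw [hv2 ⟨0, hn0⟩, hv2 ⟨n-1, by omega⟩] at h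
    rw [h]
    clear h hc1 hw1 hw2 hv1 hjeq hcard
    simp only [Fin.val_mk]
    rw [if_neg (by omega : ¬ c + t < 0), if_pos (by omega : c + t < n - 1)]
    omega
  refine ⟨γ₁, γ₂, hw1, hw2, hc1, hc2, ?_⟩
  funext x
  refine Fin.ext ?_
  show (α x : ℕ) = (γ₂ (γ₁ x) : ℕ)
  rw [hv2 (γ₁ x), hv1 x]
  clear hc1 hc2 hw1 hw2 hcard
  have hbx := hbnd x
  by_cases hxj : j < (x:ℕ)
  · have h2 := Stmt13.mono hα ((x:ℕ) - j) j (by omega)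
    have e : (α ⟨j + ((x:ℕ) - j), by omega⟩ : ℕ) = (α x : ℕ) :=
      congrArg Fin.val (Stmt13.val_congr α _ x (by omega))
    rw [if_pos hxj]
    split_ifs with h <;> omega
  · have h2 := Stmt13.mono hα (j - (x:ℕ)) (x:ℕ) (by omega)
    have e : (α ⟨(x:ℕ) + (j - (x:ℕ)), by omega⟩ : ℕ) = (α ⟨j, pj⟩ : ℕ) :=
      Stmt13.fcongr α _ _ (by omega)
    have e3 : (α ⟨(x:ℕ), by omega⟩ : ℕ) = (α x : ℕ) := rfl
    rw [if_neg hxj]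
    split_ifs with h <;> omega
end

section
/- Let M be a submonoid of the full transformation monoid on {1,…,n} whose unique element of rank n is the identity, and let X be a generating set of M. Then for every α ∈ M of rank n−1 there exists γ ∈ X with rank n−1 and Ker(γ) = Ker(α). -/
/-!
Write `α = a * b` with `a, b` in the monoid and induct on a factorisation into generators.
Since `rank (a * b) ≤ rank b`, either `b` has full rank, hence `b = 1` and `α = a`, or
`rank b = rank α = n - 1`; in the latter case `a` is injective on the image of `b`, so
`Ker (a * b) = Ker b` and the generator found for `b` also works for `α`.
-/

open Finset

theorem Finset.card_image_comp_le {α β γ : Type*} [Fintype α] [DecidableEq β] [DecidableEq γ]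
    (f : α → β) (g : β → γ) : (univ.image (g ∘ f)).card ≤ (univ.image f).card := by
  rw [← image_image]
  exact card_image_le

theorem Finset.comp_eq_comp_iff_of_card_image_comp_eq {α β γ : Type*} [Fintype α]
    [DecidableEq β] [DecidableEq γ] (f : α → β) (g : β → γ)
    (h : (univ.image (g ∘ f)).card = (univ.image f).card) (x y : α) :
    g (f x) = g (f y) ↔ f x = f y := by
  rw [← image_image] at h
  have hinj := injOn_of_card_image_eq h
  exact ⟨fun hxy => hinj (by simp) (by simp) hxy, congrArg g⟩

theorem Function.End.exists_mem_ker_eq_of_mem_closure {α : Type*} [Fintype α] [DecidableEq α]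
    (X : Set (Function.End α))
    (hX : ∀ f ∈ Submonoid.closure X, (univ.image (f : α → α)).card = Fintype.card α → f = 1)
    {f : Function.End α} (hf : f ∈ Submonoid.closure X)
    (hrank : (univ.image (f : α → α)).card + 1 = Fintype.card α) :
    ∃ γ ∈ X, (univ.image (γ : α → α)).card + 1 = Fintype.card α ∧
      ∀ x y, γ x = γ y ↔ f x = f y := by
  induction hf using Submonoid.closure_induction with
  | mem γ hγ => exact ⟨γ, hγ, hrank, fun _ _ => Iff.rfl⟩
  | one => simp [show ((1 : Function.End α) : α → α) = id from rfl] at hrank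
  | mul a b ha hb iha ihb =>
    have hle : (univ.image ((a * b : Function.End α) : α → α)).card ≤
        (univ.image (b : α → α)).card :=
      card_image_comp_le (b : α → α) (a : α → α)
    by_cases hb_full : (univ.image (b : α → α)).card = Fintype.card α
    · rw [hX b hb hb_full, mul_one] at hrank ⊢
      exact iha hrank
    · have hb_rank : (univ.image ((a * b : Function.End α) : α → α)).card =
          (univ.image (b : α → α)).card := by
        have := card_le_univ (univ.image (b : α → α))
        omega
      obtain ⟨γ, hγX, hγ_rank, hγ_ker⟩ := ihb (by omega)
      refine ⟨γ, hγX, hγ_rank, fun x y => ?_⟩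
      rw [hγ_ker]
      exact (comp_eq_comp_iff_of_card_image_comp_eq (b : α → α) (a : α → α) hb_rank x y).symm

theorem stmt_15 (n : ℕ) (hn : 1 ≤ n) (M : Submonoid (Function.End (Fin n)))
    (hM : ∀ f ∈ M, (Finset.univ.image (f : Fin n → Fin n)).card = n → f = 1)
    (X : Set (Function.End (Fin n))) (hX : Submonoid.closure X = M) :
    ∀ α ∈ M, (Finset.univ.image (α : Fin n → Fin n)).card = n - 1 →
      ∃ γ ∈ X, (Finset.univ.image (γ : Fin n → Fin n)).card = n - 1 ∧
        ∀ x y : Fin n, γ x = γ y ↔ α x = α y := by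
  subst hX
  intro α hα hrank
  obtain ⟨γ, hγX, hγ_rank, hγ_ker⟩ :=
    Function.End.exists_mem_ker_eq_of_mem_closure X (by simpa using hM) hα
      (by rw [Fintype.card_fin]; omega)
  exact ⟨γ, hγX, by rw [Fintype.card_fin] at hγ_rank; omega, hγ_ker⟩
end

section
/- For n ≥ 3, the rank (minimal size of a generating set) of the monoid wEnd P⃗ₙ is n−1. -/
variable {n : ℕ}

def collapseEdge (n j : ℕ) : Function.End (Fin n) :=
  fun i => ⟨if (i : ℕ) ≤ j then i else i - 1, by have := i.isLt; split <;> omega⟩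

def shiftUp (n : ℕ) : Function.End (Fin n) :=
  fun i => ⟨min (i + 1) (n - 1), by have := i.isLt; omega⟩

@[simp] lemma collapseEdge_val (j : ℕ) (i : Fin n) :
    (collapseEdge n j i : ℕ) = if (i : ℕ) ≤ j then (i : ℕ) else i - 1 := rfl

@[simp] lemma shiftUp_val (i : Fin n) : (shiftUp n i : ℕ) = min ((i : ℕ) + 1) (n - 1) := rfl

lemma shiftUp_pow_val (a : ℕ) (i : Fin n) : ((shiftUp n ^ a) i : ℕ) = min (i + a) (n - 1) := by
  induction a generalizing i with
  | zero => have := i.isLt; simp only [pow_zero, Function.End.one_def, id_eq]; omega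
  | succ a ih =>
    rw [pow_succ]
    change ((shiftUp n ^ a) (shiftUp n i) : ℕ) = _
    rw [ih, shiftUp_val]
    omega

lemma collapseEdge_sub_two_eq (hn : 2 ≤ n) :
    collapseEdge n (n - 2) = collapseEdge n 0 * shiftUp n := by
  funext i
  apply Fin.ext
  have := i.isLt
  change _ = (collapseEdge n 0 (shiftUp n i) : ℕ)
  rw [collapseEdge_val, collapseEdge_val, shiftUp_val,
    if_neg (show ¬min ((i : ℕ) + 1) (n - 1) ≤ 0 by omega)]
  split_ifs <;> omega

def CollapsesOnly (g : Fin n → Fin n) (j : ℕ) : Prop :=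
  ∀ u v : Fin n, (v : ℕ) = u + 1 → (g u = g v ↔ (u : ℕ) = j)

lemma CollapsesOnly.unique {g : Fin n → Fin n} {j k : ℕ} (hj : CollapsesOnly g j)
    (hk : CollapsesOnly g k) (hjn : j + 1 < n) : j = k :=
  (hk ⟨j, by omega⟩ ⟨j + 1, hjn⟩ rfl).mp ((hj ⟨j, by omega⟩ ⟨j + 1, hjn⟩ rfl).mpr rfl)

lemma collapsesOnly_collapseEdge (j : ℕ) : CollapsesOnly (collapseEdge n j) j := by
  intro u v huv
  rw [Fin.ext_iff, collapseEdge_val, collapseEdge_val]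
  split_ifs <;> omega

namespace wEnd

variable {f : Function.End (Fin n)}

lemma val_succ (hf : wEnd n f) {u v : Fin n} (huv : (v : ℕ) = u + 1) :
    (f v : ℕ) = f u ∨ (f v : ℕ) = f u + 1 := by
  by_cases h : f u = f v
  · exact Or.inl (by rw [h])
  · exact Or.inr (hf u v huv h)

lemma val_le_of_le (hf : wEnd n f) {u v : Fin n} (h : u ≤ v) :
    (f u : ℕ) ≤ f v ∧ (f v : ℕ) ≤ f u + (v - u) := by
  obtain ⟨d, hd⟩ : ∃ d, (v : ℕ) = u + d := ⟨v - u, by omega⟩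
  induction d generalizing v with
  | zero => obtain rfl : v = u := Fin.ext hd; omega
  | succ d ih =>
    have hw := ih (v := ⟨u + d, by omega⟩) (Fin.le_def.mpr (Nat.le_add_right _ _)) rfl
    have := hf.val_succ (u := ⟨u + d, by omega⟩) (v := v) (by simp only; omega)
    simp only at hw this
    omega

lemma eq_one_of_forall_ne (hf : wEnd n f) (hne : ∀ u v : Fin n, (v : ℕ) = u + 1 → f u ≠ f v) :
    f = 1 := by
  funext i
  have hn : 0 < n := i.pos
  have hadd : ∀ k (hk : k < n), (f ⟨k, hk⟩ : ℕ) = f ⟨0, hn⟩ + k := by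
    intro k
    induction k with
    | zero => intro _; rfl
    | succ k ih =>
      intro hk
      rw [hf _ _ rfl (hne ⟨k, by omega⟩ _ rfl), ih]
      rfl
  have hlast := hadd (n - 1) (by omega)
  have := (f ⟨n - 1, by omega⟩).isLt
  exact Fin.ext (by rw [hadd i i.isLt]; simp only [Function.End.one_def, id_eq]; omega)

lemma exists_eq_shiftUp_pow_mul (hf : wEnd n f) (z : Fin n) (hz : (z : ℕ) = 0) :
    ∃ g : Function.End (Fin n), wEnd n g ∧ (g z : ℕ) = 0 ∧ f = shiftUp n ^ (f z : ℕ) * g := by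
  have hge : ∀ i, (f z : ℕ) ≤ f i := fun i => (hf.val_le_of_le (Fin.le_def.mpr (by omega))).1
  refine ⟨fun i => ⟨f i - f z, by have := (f i).isLt; omega⟩, ?_, by simp, ?_⟩
  · intro u v huv hne
    have := hge u
    have := hge v
    rcases hf.val_succ huv with h | h
    · exact absurd (Fin.ext (by simp only [h])) hne
    · simp only; omega
  · funext i
    apply Fin.ext
    change _ = ((shiftUp n ^ (f z : ℕ)) _ : ℕ)
    rw [shiftUp_pow_val]
    have := (f i).isLt
    have := hge i
    simp only
    omega

lemma exists_eq_collapseEdge_mul (hf : wEnd n f) (hlt : ∀ i, (f i : ℕ) + 1 < n) {u v : Fin n}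
    (huv : (v : ℕ) = u + 1) (hcol : f u = f v) :
    ∃ g : Function.End (Fin n), wEnd n g ∧ (∀ i : Fin n, (i : ℕ) ≤ u → g i = f i) ∧
      (∀ i : Fin n, (u : ℕ) < i → (g i : ℕ) = (f i : ℕ) + 1) ∧ f = collapseEdge n (f u) * g := by
  set g : Function.End (Fin n) := fun i => if (i : ℕ) ≤ u then f i else shiftUp n (f i)
  have hg : ∀ i, (g i : ℕ) = if (i : ℕ) ≤ u then (f i : ℕ) else (f i : ℕ) + 1 := by
    intro i
    have := hlt i
    simp only [g]
    split_ifs <;> simp only [shiftUp_val]; omega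
  have hcol' : (f u : ℕ) = f v := congrArg Fin.val hcol
  refine ⟨g, ?_, fun i hi => by simp only [g, if_pos hi],
    fun i hi => by simp only [hg, if_neg (not_le.mpr hi)], ?_⟩
  · intro a b hab hne
    rw [Fin.ne_iff_vne, hg, hg] at hne
    rw [hg, hg]
    have := hf.val_succ hab
    have hedge : (a : ℕ) = u → (f a : ℕ) = f u ∧ (f b : ℕ) = f v := fun h => by
      obtain rfl : a = u := Fin.ext h
      obtain rfl : b = v := Fin.ext (by omega)
      exact ⟨rfl, rfl⟩
    split_ifs at hne ⊢ <;> omega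
  · funext i
    apply Fin.ext
    change _ = (collapseEdge n (f u) (g i) : ℕ)
    rw [collapseEdge_val, hg]
    by_cases hi : (i : ℕ) ≤ u
    · have := (hf.val_le_of_le (Fin.le_def.mpr hi)).1
      simp only [if_pos hi, if_pos this]
    · have := (hf.val_le_of_le (Fin.le_def.mpr (show (v : ℕ) ≤ i by omega))).1
      rw [if_neg hi, if_neg (by omega)]
      rfl

end wEnd

def generators (n : ℕ) : Set (Function.End (Fin n)) :=
  insert (shiftUp n) (collapseEdge n '' Set.Iio (n - 2))

lemma wEnd_collapseEdge (j : ℕ) : wEnd n (collapseEdge n j) := by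
  intro u v huv hne
  rw [Fin.ne_iff_vne, collapseEdge_val, collapseEdge_val] at hne
  rw [collapseEdge_val, collapseEdge_val]
  split_ifs at hne ⊢ <;> omega

lemma wEnd_shiftUp : wEnd n (shiftUp n) := by
  intro u v huv hne
  rw [Fin.ne_iff_vne, shiftUp_val, shiftUp_val] at hne
  rw [shiftUp_val, shiftUp_val]
  omega

lemma wEnd_of_mem_generators {f : Function.End (Fin n)} (hf : f ∈ generators n) : wEnd n f := by
  obtain rfl | ⟨j, -, rfl⟩ := hf
  · exact wEnd_shiftUp
  · exact wEnd_collapseEdge j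

lemma generators_finite : (generators n).Finite :=
  ((Set.finite_Iio _).image _).insert _

lemma ncard_generators (hn : 2 ≤ n) : (generators n).ncard = n - 1 := by
  have hnot : shiftUp n ∉ collapseEdge n '' Set.Iio (n - 2) := by
    rintro ⟨j, -, hj⟩
    have := congrArg (fun g : Function.End (Fin n) => (g ⟨0, by omega⟩ : ℕ)) hj
    simp only [collapseEdge_val, shiftUp_val, Nat.zero_le, if_true] at this
    omega
  have hinj : Set.InjOn (collapseEdge n) (Set.Iio (n - 2)) := fun j hj k _ hjk =>
    (collapsesOnly_collapseEdge j).unique (hjk ▸ collapsesOnly_collapseEdge k)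
      (by rw [Set.mem_Iio] at hj; omega)
  rw [generators, Set.ncard_insert_of_notMem hnot, hinj.ncard_image,
    Set.ncard_Iio_nat]
  omega

lemma collapseEdge_mem_closure (hn : 3 ≤ n) {j : ℕ} (hj : j ≤ n - 2) :
    collapseEdge n j ∈ Submonoid.closure (generators n) := by
  obtain hj | rfl := hj.lt_or_eq
  · exact Submonoid.subset_closure (Set.mem_insert_of_mem _ ⟨j, hj, rfl⟩)
  · rw [collapseEdge_sub_two_eq (by omega)]
    have h0 : collapseEdge n 0 ∈ generators n :=
      Set.mem_insert_of_mem _ ⟨0, Set.mem_Iio.mpr (by omega), rfl⟩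
    exact mul_mem (Submonoid.subset_closure h0) (Submonoid.subset_closure (Set.mem_insert _ _))

lemma mem_closure_generators_of_apply_zero (hn : 3 ≤ n) {f : Function.End (Fin n)} (hf : wEnd n f)
    (h0 : (f ⟨0, by omega⟩ : ℕ) = 0) : f ∈ Submonoid.closure (generators n) := by
  induction hm : n - 1 - f ⟨n - 1, by omega⟩ using Nat.strong_induction_on generalizing f with
  | _ m ih =>
  by_cases hcol : ∃ u v : Fin n, (v : ℕ) = u + 1 ∧ f u = f v
  · obtain ⟨u, v, huv, hcol⟩ := hcol
    have last_le_of_le (i : Fin n) := hf.val_le_of_le (u := i) (v := ⟨n - 1, by omega⟩)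
      (Fin.le_def.mpr (by simp only; omega))
    have hu := hf.val_le_of_le (u := ⟨0, by omega⟩) (v := u) (Fin.le_def.mpr (Nat.zero_le _))
    have hcol' : (f u : ℕ) = f v := congrArg Fin.val hcol
    have hlast : (f ⟨n - 1, by omega⟩ : ℕ) ≤ n - 2 := by
      have := last_le_of_le v
      simp only at hu this
      omega
    have hlt : ∀ i, (f i : ℕ) + 1 < n := fun i => by have := last_le_of_le i; omega
    obtain ⟨g, hg, hgle, hggt, hfg⟩ := hf.exists_eq_collapseEdge_mul hlt huv hcol
    have hg0 : (g ⟨0, by omega⟩ : ℕ) = 0 := by rw [hgle _ (Nat.zero_le _)]; exact h0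
    have hglast := hggt ⟨n - 1, by omega⟩ (by simp only; omega)
    rw [hfg]
    refine mul_mem (collapseEdge_mem_closure hn (by have := hlt u; omega)) (ih _ ?_ hg hg0 rfl)
    omega
  · push Not at hcol
    rw [hf.eq_one_of_forall_ne fun u v huv => hcol u v huv]
    exact one_mem _

lemma mem_closure_generators (hn : 3 ≤ n) {f : Function.End (Fin n)} (hf : wEnd n f) :
    f ∈ Submonoid.closure (generators n) := by
  obtain ⟨g, hg, hg0, hfg⟩ := hf.exists_eq_shiftUp_pow_mul ⟨0, by omega⟩ rfl
  rw [hfg]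
  exact mul_mem (pow_mem (Submonoid.subset_closure (Set.mem_insert _ _)) _)
    (mem_closure_generators_of_apply_zero hn hg hg0)

lemma exists_collapsesOnly_of_mem_closure {S : Set (Function.End (Fin n))}
    (hS : ∀ s ∈ S, wEnd n s) {x : Function.End (Fin n)} (hx : x ∈ Submonoid.closure S) {j : ℕ}
    (hj : j + 1 < n) (hxj : CollapsesOnly x j) : ∃ s ∈ S, CollapsesOnly s j := by
  induction hx using Submonoid.closure_induction_right with
  | one =>
    have := congrArg Fin.val ((hxj ⟨j, hj.le⟩ ⟨j + 1, hj⟩ rfl).mpr rfl)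
    simp only [Function.End.one_def, id_eq] at this
    omega
  | mul_right x _ s hs ih =>
    have hxs : ∀ u v : Fin n, (v : ℕ) = u + 1 → s u = s v → (u : ℕ) = j := fun u v huv h =>
      (hxj u v huv).mp (congrArg x h)
    by_cases hsj : s ⟨j, hj.le⟩ = s ⟨j + 1, hj⟩
    · refine ⟨s, hs, fun u v huv => ⟨hxs u v huv, fun hu => ?_⟩⟩
      obtain rfl : u = ⟨j, hj.le⟩ := Fin.ext hu
      obtain rfl : v = ⟨j + 1, hj⟩ := Fin.ext huv
      exact hsj
    · have hs1 : s = 1 := (hS s hs).eq_one_of_forall_ne fun u v huv h => by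
        obtain rfl : u = ⟨j, hj.le⟩ := Fin.ext (hxs u v huv h)
        obtain rfl : v = ⟨j + 1, hj⟩ := Fin.ext huv
        exact hsj h
      rw [hs1, mul_one] at hxj
      exact ih hxj

lemma sub_one_le_ncard_of_collapseEdge_mem_closure {S : Set (Function.End (Fin n))}
    (hS : S.Finite) (hSw : ∀ s ∈ S, wEnd n s)
    (hgen : ∀ j, j + 1 < n → collapseEdge n j ∈ Submonoid.closure S) : n - 1 ≤ S.ncard := by
  have hex : ∀ j ∈ Set.Iio (n - 1), ∃ s ∈ S, CollapsesOnly s j := fun j hj => by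
    rw [Set.mem_Iio] at hj
    exact exists_collapsesOnly_of_mem_closure hSw (hgen j (by omega)) (by omega)
      (collapsesOnly_collapseEdge j)
  choose! s hsS hs using hex
  calc n - 1 = (Set.Iio (n - 1)).ncard := (Set.ncard_Iio_nat _).symm
    _ ≤ S.ncard := Set.ncard_le_ncard_of_injOn s hsS
        (fun j hj k hk hjk => (hs j hj).unique (hjk ▸ hs k hk) (by rw [Set.mem_Iio] at hj; omega))
        hS

/-- The rank of the monoid `wEnd P⃗ₙ` is `n - 1`: `n - 1` is the least cardinality of a
set of weak endomorphisms generating all of them under composition. -/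
theorem stmt_16 (n : ℕ) (hn : 3 ≤ n) :
    IsLeast {m : ℕ | ∃ S : Set (Function.End (Fin n)), S.Finite ∧ S.ncard = m ∧
      (∀ f ∈ S, wEnd n f) ∧
      ∀ f : Fin n → Fin n, wEnd n f →
        (f : Function.End (Fin n)) ∈ Submonoid.closure S} (n - 1) := by
  refine ⟨⟨generators n, generators_finite, ncard_generators (by omega),
    fun f hf => wEnd_of_mem_generators hf, fun f hf => mem_closure_generators hn hf⟩, ?_⟩
  rintro m ⟨S, hS, rfl, hSw, hgen⟩
  exact sub_one_le_ncard_of_collapseEdge_mem_closure hS hSw fun j _ =>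
    hgen _ (wEnd_collapseEdge j)
end
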